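/- arXiv:2007.15263 — 9 statements merged into one kernel-verified Lean document; each statement's English description precedes it below -/
import Mathlib

section
/- Let α > β ≥ 0 and set R_{α,β}(x) = α‖x‖₁ − β‖x‖₂. If a sequence (xₙ) in ℓ² converges weakly to x ∈ ℓ² and the sequence (R_{α,β}(xₙ)) is bounded, then ‖x‖₁ < ∞ and R_{α,β}(x) ≤ liminfₙ R_{α,β}(xₙ) (weak lower semicontinuity of R_{α,β}). -/
open scoped ENNReal NNReal RealInnerProductSpace
open Filter

noncomputable section

/-- `ℓ²(ℕ)`, the real Hilbert space of square-summable sequences. -/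
abbrev L2 : Type := lp (fun _ : ℕ => ℝ) 2

/-- The (possibly infinite) `ℓ¹`-norm of an element of `ℓ²`. -/
def l1norm (x : L2) : ℝ≥0∞ := ∑' i, (‖x i‖₊ : ℝ≥0∞)

/-- The functional `R_{α,β}(x) = α‖x‖₁ − β‖x‖₂`, valued in `[0,∞]`. -/
def Rab (α β : ℝ) (x : L2) : ℝ≥0∞ :=
  ENNReal.ofReal α * l1norm x - ENNReal.ofReal (β * ‖x‖)

/-- The `ℓ²`-norm is at most the `ℓ¹`-norm. -/
lemma nn_le_l1 (x : L2) : (‖x‖₊ : ℝ≥0∞) ≤ l1norm x := by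
  have hp : 0 < (2 : ℝ≥0∞).toReal := by norm_num
  have hsq : ((‖x‖₊ : ℝ≥0∞)) ^ 2 = ∑' i, ((‖x i‖₊ : ℝ≥0∞)) ^ 2 := by
    have h := lp.norm_rpow_eq_tsum hp x
    have hsumm : Summable fun i => ‖x i‖ ^ (2:ℝ) := by
      have := lp.memℓp x
      rw [memℓp_gen_iff hp] at this
      simpa using this
    simp only [ENNReal.toReal_ofNat] at h
    have h2 : ENNReal.ofReal (‖x‖ ^ (2:ℝ)) = ∑' i, ENNReal.ofReal (‖x i‖ ^ (2:ℝ)) := by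
      rw [h]
      exact ENNReal.ofReal_tsum_of_nonneg (fun i => Real.rpow_nonneg (norm_nonneg _) _) hsumm
    have key : ∀ (a : ℝ), 0 ≤ a → ENNReal.ofReal (a ^ (2:ℝ)) = (ENNReal.ofReal a) ^ 2 := by
      intro a ha
      rw [show (2:ℝ) = ((2:ℕ):ℝ) by norm_num, Real.rpow_natCast, ENNReal.ofReal_pow ha]
    rw [key _ (norm_nonneg _), ofReal_norm, enorm_eq_nnnorm] at h2
    rw [h2]
    exact tsum_congr fun i => by rw [key _ (norm_nonneg _), ofReal_norm, enorm_eq_nnnorm]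
  by_contra hlt
  push_neg at hlt
  have h2 : l1norm x ^ 2 < (‖x‖₊ : ℝ≥0∞) ^ 2 := (ENNReal.pow_lt_pow_left_iff two_ne_zero).2 hlt
  have h3 : (‖x‖₊ : ℝ≥0∞) ^ 2 ≤ l1norm x ^ 2 := by
    rw [hsq, pow_two]
    calc ∑' i, ((‖x i‖₊ : ℝ≥0∞)) ^ 2 ≤ ∑' i, ((‖x i‖₊ : ℝ≥0∞)) * l1norm x := by
          refine ENNReal.tsum_le_tsum fun i => ?_
          rw [pow_two]
          exact mul_le_mul_right (ENNReal.le_tsum i) _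
      _ = l1norm x * l1norm x := by rw [ENNReal.tsum_mul_right]; rfl
  exact absurd (h3.trans_lt h2) (lt_irrefl _)

/-- weak lower semicontinuity of `R_{α,β}` for `α > β ≥ 0`:
if `xₙ ⇀ x` weakly in `ℓ²` and `(R_{α,β}(xₙ))ₙ` is bounded, then `‖x‖₁ < ∞`
and `R_{α,β}(x) ≤ liminfₙ R_{α,β}(xₙ)`. -/
theorem stmt1 (α β : ℝ) (hβ : 0 ≤ β) (hαβ : β < α)
    (x : ℕ → L2) (x₀ : L2)
    (hweak : ∀ z : L2, Tendsto (fun n => ⟪x n, z⟫) atTop (nhds ⟪x₀, z⟫))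
    (hbdd : ∃ C : ℝ≥0∞, C < ⊤ ∧ ∀ n, Rab α β (x n) ≤ C) :
    l1norm x₀ < ⊤ ∧ Rab α β x₀ ≤ Filter.liminf (fun n => Rab α β (x n)) atTop := by
  classical
  obtain ⟨C, hCtop, hRC⟩ := hbdd
  have hα : 0 < α := lt_of_le_of_lt hβ hαβ
  set A : ℝ≥0∞ := ENNReal.ofReal α with hA
  set B : ℝ≥0∞ := ENNReal.ofReal β with hB
  have hA0 : A ≠ 0 := by
    simp only [hA, ne_eq, ENNReal.ofReal_eq_zero, not_le]; exact hα
  have hAtop : A ≠ ⊤ := ENNReal.ofReal_ne_top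
  have hBA : B ≤ A := ENNReal.ofReal_le_ofReal hαβ.le
  -- componentwise convergence
  have hpt : ∀ i, Tendsto (fun n => x n i) atTop (nhds (x₀ i)) := by
    intro i
    have e : ∀ (f : L2), ⟪f, lp.single 2 i (1:ℝ)⟫ = f i := by
      intro f
      rw [lp.inner_single_right]
      simp [RCLike.inner_apply]
    simpa only [e] using hweak (lp.single 2 i (1:ℝ))
  have hnn : ∀ i, Tendsto (fun n => ((‖x n i‖₊ : ℝ≥0∞))) atTop (nhds ((‖x₀ i‖₊ : ℝ≥0∞))) :=
    fun i => ENNReal.tendsto_coe.2 ((continuous_nnnorm.tendsto _).comp (hpt i))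
  have hptF : ∀ F : Finset ℕ, Tendsto (fun n => ∑ i ∈ F, ((‖x n i‖₊:ℝ≥0∞)))
      atTop (nhds (∑ i ∈ F, ((‖x₀ i‖₊:ℝ≥0∞)))) :=
    fun F => tendsto_finset_sum F fun i _ => hnn i
  have hynn : ∀ i, Tendsto (fun n => ((‖(x n - x₀) i‖₊:ℝ≥0∞))) atTop (nhds 0) := by
    intro i
    have h1 : Tendsto (fun n => x n i - x₀ i) atTop (nhds (x₀ i - x₀ i)) :=
      (hpt i).sub tendsto_const_nhds
    rw [sub_self] at h1
    have h2 : Tendsto (fun n => ((‖x n i - x₀ i‖₊:ℝ≥0∞))) atTop (nhds ((‖(0:ℝ)‖₊:ℝ≥0∞))) :=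
      ENNReal.tendsto_coe.2 ((continuous_nnnorm.tendsto _).comp h1)
    simp only [nnnorm_zero, ENNReal.coe_zero] at h2
    exact h2.congr fun n => by simp
  have hyF0 : ∀ F : Finset ℕ, Tendsto (fun n => A * ∑ i ∈ F, ((‖(x n - x₀) i‖₊:ℝ≥0∞)))
      atTop (nhds 0) := by
    intro F
    have h := tendsto_finset_sum F fun i (_ : i ∈ F) => hynn i
    simp only [Finset.sum_const_zero] at h
    have h2 := ENNReal.Tendsto.const_mul h (Or.inr hAtop)
    simpa using h2
  -- bound on norms via Banach–Steinhaus
  have hMex : ∃ M : ℝ, ∀ n, ‖x n‖ ≤ M := by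
    obtain ⟨M, hM⟩ := banach_steinhaus (E := L2) (F := ℝ)
      (g := fun n => innerSL ℝ (x n)) (fun z => by
        obtain ⟨c, hc⟩ := ((hweak z).norm).bddAbove_range
        exact ⟨c, fun n => hc (Set.mem_range_self n)⟩)
    exact ⟨M, fun n => by simpa [innerSL_apply_norm] using hM n⟩
  obtain ⟨M, hM⟩ := hMex
  -- uniform bound on ℓ¹ norms
  have hRCdef : ∀ n, A * l1norm (x n) ≤ C + ENNReal.ofReal (β * ‖x n‖) :=
    fun n => tsub_le_iff_right.mp (hRC n)
  set K : ℝ≥0∞ := (C + ENNReal.ofReal (β * M)) / A with hK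
  have hKtop : K ≠ ⊤ := by
    refine (ENNReal.div_lt_top ?_ hA0).ne
    exact ENNReal.add_ne_top.2 ⟨hCtop.ne, ENNReal.ofReal_ne_top⟩
  have hLK : ∀ n, l1norm (x n) ≤ K := by
    intro n
    rw [hK, ENNReal.le_div_iff_mul_le (Or.inl hA0) (Or.inl hAtop), mul_comm]
    exact (hRCdef n).trans (add_le_add_right
      (ENNReal.ofReal_le_ofReal (mul_le_mul_of_nonneg_left (hM n) hβ)) C)
  have hliminfK : liminf (fun n => l1norm (x n)) atTop ≤ K := by
    calc liminf (fun n => l1norm (x n)) atTop ≤ liminf (fun _ => K) atTop :=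
          liminf_le_liminf (Eventually.of_forall hLK)
      _ = K := liminf_const K
  have hL0lim : l1norm x₀ ≤ liminf (fun n => l1norm (x n)) atTop := by
    rw [l1norm, ENNReal.tsum_eq_iSup_sum]
    refine iSup_le fun F => ?_
    rw [← (hptF F).liminf_eq]
    exact liminf_le_liminf (Eventually.of_forall fun n => ENNReal.sum_le_tsum F)
  have hfin : l1norm x₀ < ⊤ := lt_of_le_of_lt (hL0lim.trans hliminfK)
    (lt_top_iff_ne_top.2 hKtop)
  refine ⟨hfin, ?_⟩
  set g : ℕ → ℝ≥0∞ := fun n => Rab α β (x n) with hg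
  -- splitting of the ℓ¹ norm along a finite set
  have hsplit : ∀ (F : Finset ℕ) (w : L2),
      (∑ i ∈ F, (‖w i‖₊:ℝ≥0∞)) + (∑' i : {i : ℕ // i ∉ F}, (‖w (i:ℕ)‖₊:ℝ≥0∞)) = l1norm w := by
    intro F w
    have h := Summable.tsum_add_tsum_compl (s := (↑F : Set ℕ)) (f := fun i => ((‖w i‖₊:ℝ≥0∞)))
      ENNReal.summable ENNReal.summable
    rw [← Finset.tsum_subtype F (fun i => ((‖w i‖₊:ℝ≥0∞)))]
    exact h
  unfold Rab
  rw [tsub_le_iff_right]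
  set N₀ : ℝ≥0∞ := ENNReal.ofReal (β * ‖x₀‖) with hN₀
  refine ENNReal.le_of_forall_pos_le_add fun ε hε _ => ?_
  set ε2 : ℝ≥0 := ε / 2 with hε2
  set ε4 : ℝ≥0 := ε / 4 with hε4
  have hε2pos : (0:ℝ≥0∞) < (ε2:ℝ≥0∞) := by
    rw [ENNReal.coe_pos, hε2]
    positivity
  have hnnsum : ε4 + ε2 + ε4 = ε := by
    rw [hε2, hε4]
    apply NNReal.coe_injective
    push_cast [NNReal.coe_div]
    ring
  have hεsum : ((ε4:ℝ≥0∞)) + ε2 + ε4 = (ε:ℝ≥0∞) := by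
    rw [← ENNReal.coe_add, ← ENNReal.coe_add]
    exact ENNReal.coe_inj.2 hnnsum
  -- choose a finite set with a small tail
  have hδpos : (0:ℝ≥0∞) < ((ε4:ℝ≥0∞)) / A :=
    ENNReal.div_pos (by simpa [hε4] using (by positivity : (0:ℝ≥0) < ε/4).ne') hAtop
  obtain ⟨F, hF⟩ := ((ENNReal.tendsto_tsum_compl_atTop_zero
    (f := fun i => ((‖x₀ i‖₊:ℝ≥0∞))) hfin.ne).eventually_le_const hδpos).exists
  set tF : ℝ≥0∞ := ∑' i : {i : ℕ // i ∉ F}, ((‖x₀ (i:ℕ)‖₊:ℝ≥0∞)) with htF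
  have htail : A * tF ≤ (ε4:ℝ≥0∞) := by
    calc A * tF ≤ A * (((ε4:ℝ≥0∞)) / A) := mul_le_mul_right hF _
      _ = (ε4:ℝ≥0∞) := ENNReal.mul_div_cancel hA0 hAtop
  -- the key liminf estimate for the fixed finite set F
  have claim : A * (∑ i ∈ F, ((‖x₀ i‖₊:ℝ≥0∞)))
      ≤ liminf g atTop + (N₀ + A * tF + (ε2:ℝ≥0∞)) := by
    have hev : ∀ᶠ n in atTop, A * ∑ i ∈ F, ((‖x n i‖₊:ℝ≥0∞))
        ≤ g n + (N₀ + A * tF + (ε2:ℝ≥0∞)) := by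
      filter_upwards [(hyF0 F).eventually_le_const hε2pos] with n hn
      set SFx : ℝ≥0∞ := ∑ i ∈ F, ((‖x n i‖₊:ℝ≥0∞)) with hSFx
      set SFy : ℝ≥0∞ := ∑ i ∈ F, ((‖(x n - x₀) i‖₊:ℝ≥0∞)) with hSFy
      have hsx := hsplit F (x n)
      have hsy := hsplit F (x n - x₀)
      have htermwise : (∑' i : {i:ℕ // i ∉ F}, ((‖(x n - x₀) (i:ℕ)‖₊:ℝ≥0∞)))
          ≤ (∑' i : {i:ℕ // i ∉ F}, ((‖x n (i:ℕ)‖₊:ℝ≥0∞))) + tF := by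
        rw [htF, ← ENNReal.tsum_add]
        refine ENNReal.tsum_le_tsum fun i => ?_
        have hco : (x n - x₀) (i:ℕ) = x n (i:ℕ) - x₀ (i:ℕ) := by simp
        rw [hco, ← ENNReal.coe_add, ENNReal.coe_le_coe]
        exact nnnorm_sub_le _ _
      have h4 : SFx + l1norm (x n - x₀)
          ≤ l1norm (x n) + SFy + tF := by
        rw [← hsx, ← hsy]
        calc SFx + (SFy + ∑' i : {i:ℕ // i ∉ F}, ((‖(x n - x₀) (i:ℕ)‖₊:ℝ≥0∞)))
            ≤ SFx + (SFy + ((∑' i : {i:ℕ // i ∉ F}, ((‖x n (i:ℕ)‖₊:ℝ≥0∞))) + tF)) := by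
              gcongr
          _ = SFx + (∑' i : {i:ℕ // i ∉ F}, ((‖x n (i:ℕ)‖₊:ℝ≥0∞))) + SFy + tF := by ring
      have hMn : (B * ((‖x n - x₀‖₊:ℝ≥0∞))) ≠ ⊤ :=
        ENNReal.mul_ne_top ENNReal.ofReal_ne_top ENNReal.coe_ne_top
      have h1 : A * l1norm (x n) ≤ g n + ENNReal.ofReal (β * ‖x n‖) := by
        have h0 : g n = A * l1norm (x n) - ENNReal.ofReal (β * ‖x n‖) := rfl
        rw [h0]
        exact le_tsub_add
      have h2 : ENNReal.ofReal (β * ‖x n‖) ≤ N₀ + B * ((‖x n - x₀‖₊:ℝ≥0∞)) := by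
        have hnorm : ‖x n‖ ≤ ‖x₀‖ + ‖x n - x₀‖ := by
          have h := norm_add_le x₀ (x n - x₀)
          simpa using h
        calc ENNReal.ofReal (β * ‖x n‖)
            ≤ ENNReal.ofReal (β * (‖x₀‖ + ‖x n - x₀‖)) :=
              ENNReal.ofReal_le_ofReal (mul_le_mul_of_nonneg_left hnorm hβ)
          _ = N₀ + ENNReal.ofReal (β * ‖x n - x₀‖) := by
              rw [mul_add, ENNReal.ofReal_add (by positivity) (by positivity)]
          _ = N₀ + B * ((‖x n - x₀‖₊:ℝ≥0∞)) := by
              rw [ENNReal.ofReal_mul hβ, ofReal_norm, enorm_eq_nnnorm]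
      have h3 : B * ((‖x n - x₀‖₊:ℝ≥0∞)) ≤ A * l1norm (x n - x₀) :=
        mul_le_mul' hBA (nn_le_l1 _)
      have key : A * SFx + B * ((‖x n - x₀‖₊:ℝ≥0∞))
          ≤ (g n + (N₀ + A * tF + (ε2:ℝ≥0∞))) + B * ((‖x n - x₀‖₊:ℝ≥0∞)) := by
        calc A * SFx + B * ((‖x n - x₀‖₊:ℝ≥0∞))
            ≤ A * SFx + A * l1norm (x n - x₀) := add_le_add_right h3 _
          _ = A * (SFx + l1norm (x n - x₀)) := by ring
          _ ≤ A * (l1norm (x n) + SFy + tF) := mul_le_mul_right h4 _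
          _ = A * l1norm (x n) + A * SFy + A * tF := by ring
          _ ≤ (g n + ENNReal.ofReal (β * ‖x n‖)) + (ε2:ℝ≥0∞) + A * tF := by
              exact add_le_add (add_le_add h1 hn) le_rfl
          _ ≤ (g n + (N₀ + B * ((‖x n - x₀‖₊:ℝ≥0∞)))) + (ε2:ℝ≥0∞) + A * tF := by
              gcongr
          _ = (g n + (N₀ + A * tF + (ε2:ℝ≥0∞))) + B * ((‖x n - x₀‖₊:ℝ≥0∞)) := by ring
      exact (ENNReal.add_le_add_iff_right hMn).mp key
    have hlim : Tendsto (fun n => A * ∑ i ∈ F, ((‖x n i‖₊:ℝ≥0∞))) atTop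
        (nhds (A * ∑ i ∈ F, ((‖x₀ i‖₊:ℝ≥0∞)))) :=
      ENNReal.Tendsto.const_mul (hptF F) (Or.inr hAtop)
    calc A * (∑ i ∈ F, ((‖x₀ i‖₊:ℝ≥0∞)))
        = liminf (fun n => A * ∑ i ∈ F, ((‖x n i‖₊:ℝ≥0∞))) atTop := hlim.liminf_eq.symm
      _ ≤ liminf (fun n => g n + (N₀ + A * tF + (ε2:ℝ≥0∞))) atTop := liminf_le_liminf hev
      _ = liminf g atTop + (N₀ + A * tF + (ε2:ℝ≥0∞)) :=
          liminf_add_const atTop g _ Filter.isCobounded_ge_of_top Filter.isBounded_ge_of_bot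
  -- conclude
  have hsplit0 := hsplit F x₀
  calc A * l1norm x₀ = A * (∑ i ∈ F, ((‖x₀ i‖₊:ℝ≥0∞))) + A * tF := by
        rw [← hsplit0, mul_add]
    _ ≤ (liminf g atTop + (N₀ + A * tF + (ε2:ℝ≥0∞))) + A * tF := add_le_add_left claim _
    _ = liminf g atTop + N₀ + ((ε2:ℝ≥0∞) + A * tF + A * tF) := by ring
    _ ≤ liminf g atTop + N₀ + ((ε2:ℝ≥0∞) + (ε4:ℝ≥0∞) + (ε4:ℝ≥0∞)) := by gcongr
    _ = liminf g atTop + N₀ + (ε:ℝ≥0∞) := by rw [← hεsum]; ring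
end
end

section
/- Let α > β ≥ 0 and set R_{α,β}(x) = α‖x‖₁ − β‖x‖₂. If a sequence (xₙ) in ℓ² converges weakly to x ∈ ℓ², ‖x‖₁ < ∞, and R_{α,β}(xₙ) → R_{α,β}(x), then ‖xₙ − x‖₂ → 0 (the Radon–Riesz property of R_{α,β}). -/
open scoped ENNReal NNReal RealInnerProductSpace
open Filter

noncomputable section

lemma summable_of_l1 {y : L2} (h : l1norm y ≠ ⊤) : Summable fun i => |y i| := by
  have h1 : Summable fun i => ‖y i‖₊ := ENNReal.tsum_coe_ne_top_iff_summable.mp h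
  have h2 := NNReal.summable_coe.mpr h1
  simpa [Real.norm_eq_abs] using h2

lemma l1_eq {y : L2} (h : Summable fun i => |y i|) :
    l1norm y = ENNReal.ofReal (∑' i, |y i|) := by
  rw [ENNReal.ofReal_tsum_of_nonneg (fun i => abs_nonneg _) h]
  unfold l1norm
  congr 1
  ext i
  rw [← Real.norm_eq_abs, ofReal_norm, enorm_eq_nnnorm]

lemma norm_le_tsum_abs (y : L2) (h : Summable fun i => |y i|) :
    ‖y‖ ≤ ∑' i, |y i| := by
  set S := ∑' i, |y i| with hSdef
  have hS : 0 ≤ S := tsum_nonneg fun i => abs_nonneg _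
  have hsum2 : Summable fun i => |y i| ^ 2 := by
    have := (lp.memℓp y).summable (p := 2) (by norm_num)
    have h2 : ∀ z : ℝ, ‖z‖ ^ ((2:ℝ≥0∞).toReal) = |z| ^ 2 := by
      intro z
      rw [Real.norm_eq_abs]
      norm_num
    simpa [h2] using this
  have hnorm2 : ‖y‖ ^ 2 = ∑' i, |y i| ^ 2 := by
    have := lp.norm_rpow_eq_tsum (p := 2) (by norm_num) y
    have h2 : ∀ z : ℝ, ‖z‖ ^ ((2:ℝ≥0∞).toReal) = |z| ^ 2 := by
      intro z
      rw [Real.norm_eq_abs]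
      norm_num
    rw [show ((2:ℝ≥0∞).toReal) = (2:ℝ) by norm_num] at this
    rw [show (‖y‖ ^ (2:ℕ) : ℝ) = ‖y‖ ^ (2:ℝ) by
      rw [show ((2:ℝ)) = ((2:ℕ):ℝ) by norm_num, Real.rpow_natCast], this]
    congr 1
    ext i
    rw [Real.norm_eq_abs, show ((2:ℝ)) = ((2:ℕ):ℝ) by norm_num, Real.rpow_natCast]
  have hterm : ∀ i, |y i| ^ 2 ≤ |y i| * S := by
    intro i
    have hle : |y i| ≤ S := Summable.le_tsum h i fun j _ => abs_nonneg _
    nlinarith [abs_nonneg (y i)]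
  have hle2 : ‖y‖ ^ 2 ≤ S ^ 2 := by
    rw [hnorm2]
    calc ∑' i, |y i| ^ 2 ≤ ∑' i, |y i| * S := Summable.tsum_le_tsum hterm hsum2 (h.mul_right S)
      _ = S * S := by rw [tsum_mul_right]
      _ = S ^ 2 := by ring
  exact le_of_pow_le_pow_left₀ two_ne_zero hS hle2

lemma Rab_eq {α β : ℝ} (hβ : 0 ≤ β) (hαβ : β < α) (y : L2) (h : Summable fun i => |y i|) :
    Rab α β y = ENNReal.ofReal (α * (∑' i, |y i|) - β * ‖y‖) := by
  have hα : 0 ≤ α := le_of_lt (hβ.trans_lt hαβ)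
  rw [Rab, l1_eq h, ← ENNReal.ofReal_mul hα, ← ENNReal.ofReal_sub _ (by positivity)]

/-- the Radon–Riesz property of `R_{α,β}` for `α > β ≥ 0`:
if `xₙ ⇀ x` weakly in `ℓ²`, `‖x‖₁ < ∞` and `R_{α,β}(xₙ) → R_{α,β}(x)`,
then `‖xₙ − x‖₂ → 0`. -/
theorem stmt2 (α β : ℝ) (hβ : 0 ≤ β) (hαβ : β < α)
    (x : ℕ → L2) (x₀ : L2)
    (hweak : ∀ z : L2, Tendsto (fun n => ⟪x n, z⟫) atTop (nhds ⟪x₀, z⟫))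
    (hfin : l1norm x₀ < ⊤)
    (hconv : Tendsto (fun n => Rab α β (x n)) atTop (nhds (Rab α β x₀))) :
    Tendsto (fun n => ‖x n - x₀‖) atTop (nhds 0) := by
  have hα : 0 < α := hβ.trans_lt hαβ
  have hx₀sum : Summable fun i => |x₀ i| := summable_of_l1 hfin.ne
  set L : ℝ := ∑' i, |x₀ i| with hLdef
  have hLnn : 0 ≤ L := tsum_nonneg fun i => abs_nonneg _
  have hx₀norm : ‖x₀‖ ≤ L := norm_le_tsum_abs x₀ hx₀sum
  -- coordinatewise convergence
  have hcoord : ∀ i, Tendsto (fun n => x n i) atTop (nhds (x₀ i)) := by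
    intro i
    have := hweak (lp.single 2 i (1:ℝ))
    simpa [lp.inner_single_right, RCLike.inner_apply] using this
  -- Brezis–Lieb type step
  set g : ℕ → ℕ → ℝ := fun n i => |x n i| - |x n i - x₀ i| with hgdef
  have hgconv : ∀ i, Tendsto (fun n => g n i) atTop (nhds (|x₀ i|)) := by
    intro i
    have h1 : Tendsto (fun n => |x n i| - |x n i - x₀ i|) atTop
        (nhds (|x₀ i| - |x₀ i - x₀ i|)) :=
      ((hcoord i).abs).sub (((hcoord i).sub tendsto_const_nhds).abs)
    simpa using h1
  have hgbound : ∀ n i, |g n i| ≤ |x₀ i| := by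
    intro n i
    have := abs_abs_sub_abs_le_abs_sub (x n i) (x n i - x₀ i)
    simpa using this
  have hBL : Tendsto (fun n => ∑' i, g n i) atTop (nhds L) :=
    tendsto_tsum_of_dominated_convergence hx₀sum hgconv
      (Eventually.of_forall fun n i => by simpa [Real.norm_eq_abs] using hgbound n i)
  -- Rab x₀
  have hr0 : Rab α β x₀ = ENNReal.ofReal (α * L - β * ‖x₀‖) := Rab_eq hβ hαβ x₀ hx₀sum
  have hr0nn : 0 ≤ α * L - β * ‖x₀‖ := by nlinarith
  have hr0ne : Rab α β x₀ ≠ ⊤ := by simp [hr0]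
  have hr : Tendsto (fun n => (Rab α β (x n)).toReal) atTop (nhds (α * L - β * ‖x₀‖)) := by
    have := (ENNReal.tendsto_toReal hr0ne).comp hconv
    rwa [Function.comp_def, hr0, ENNReal.toReal_ofReal hr0nn] at this
  -- eventually finite ℓ¹ norm
  have heF : ∀ᶠ n in atTop, l1norm (x n) ≠ ⊤ := by
    have hlt : ∀ᶠ n in atTop, Rab α β (x n) < ⊤ := by
      have : Rab α β x₀ < ⊤ := hr0ne.lt_top
      exact hconv.eventually_lt_const this |>.mono fun n h => h
    filter_upwards [hlt] with n hn
    intro htop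
    rw [Rab, htop, ENNReal.mul_top (ENNReal.ofReal_pos.mpr hα).ne'] at hn
    rw [ENNReal.sub_eq_top_iff.mpr ⟨rfl, ENNReal.ofReal_ne_top⟩] at hn
    exact (lt_irrefl _ hn)
  -- key eventual inequality
  have key : ∀ᶠ n in atTop, (α - β) * ‖x n - x₀‖ ≤
      ((Rab α β (x n)).toReal - (α * L - β * ‖x₀‖)) + α * (L - ∑' i, g n i) := by
    filter_upwards [heF] with n hn
    have hsumn : Summable fun i => |x n i| := summable_of_l1 hn
    have hsumd : Summable fun i => |x n i - x₀ i| := by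
      apply (hsumn.add hx₀sum).of_nonneg_of_le (fun i => abs_nonneg _)
      intro i
      simpa [Real.norm_eq_abs] using norm_sub_le (x n i) (x₀ i)
    set A : ℝ := ∑' i, |x n i| with hAdef
    set E : ℝ := ∑' i, |x n i - x₀ i| with hEdef
    have hAnn : 0 ≤ A := tsum_nonneg fun i => abs_nonneg _
    have hAE : ∑' i, g n i = A - E := Summable.tsum_sub hsumn hsumd
    have hcoe : ∀ i : ℕ, (x n - x₀) i = x n i - x₀ i := fun i => rfl
    have hdE : ‖x n - x₀‖ ≤ E := by
      have := norm_le_tsum_abs (x n - x₀) (by simpa [hcoe] using hsumd)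
      simpa [hcoe] using this
    have hnA : ‖x n‖ ≤ A := norm_le_tsum_abs (x n) hsumn
    have htri : ‖x n‖ ≤ ‖x n - x₀‖ + ‖x₀‖ := by
      calc ‖x n‖ = ‖(x n - x₀) + x₀‖ := by rw [sub_add_cancel]
        _ ≤ ‖x n - x₀‖ + ‖x₀‖ := norm_add_le _ _
    have hRn : (Rab α β (x n)).toReal = α * A - β * ‖x n‖ := by
      rw [Rab_eq hβ hαβ (x n) hsumn, ENNReal.toReal_ofReal (by nlinarith [norm_nonneg (x n)])]
    rw [hRn, hAE]
    nlinarith [norm_nonneg (x n - x₀), norm_nonneg (x n)]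
  -- squeeze
  have hRHS : Tendsto (fun n => ((Rab α β (x n)).toReal - (α * L - β * ‖x₀‖))
      + α * (L - ∑' i, g n i)) atTop (nhds 0) := by
    have h1 : Tendsto (fun n => (Rab α β (x n)).toReal - (α * L - β * ‖x₀‖)) atTop (nhds 0) := by
      simpa using hr.sub_const (α * L - β * ‖x₀‖)
    have h2 : Tendsto (fun n => α * (L - ∑' i, g n i)) atTop (nhds (α * (L - L))) :=
      (tendsto_const_nhds.sub hBL).const_mul α
    simpa using h1.add h2
  have hmul : Tendsto (fun n => (α - β) * ‖x n - x₀‖) atTop (nhds 0) := by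
    apply squeeze_zero' (Eventually.of_forall fun n => mul_nonneg (sub_nonneg.mpr hαβ.le) (norm_nonneg _)) key hRHS
  have hαβ' : (α - β) ≠ 0 := sub_ne_zero.mpr hαβ.ne'
  have := hmul.const_mul (α - β)⁻¹
  simpa [← mul_assoc, inv_mul_cancel₀ hαβ'] using this

end
end

section
/- Let a ∈ ℓ¹(ℕ) be a summable real sequence and define φ(α) = ‖S_α(a)‖₁ = Σᵢ max(|aᵢ| − α, 0) for α ≥ 0. Then φ is continuous and nonincreasing on [0,∞), φ(0) = ‖a‖₁, φ(α) = 0 for every α ≥ supᵢ |aᵢ|, and if a ≠ 0 then φ is strictly decreasing on [0, supᵢ |aᵢ|]. -/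
open scoped ENNReal NNReal
open Filter

noncomputable section

/-- `φ(α) = ‖S_α(a)‖₁ = Σᵢ max(|aᵢ| − α, 0)`, the `ℓ¹`-norm of the
soft-thresholding of `a` with threshold `α`. -/
def phi (a : ℕ → ℝ) (α : ℝ) : ℝ := ∑' i, max (|a i| - α) 0

lemma phi_summable (a : ℕ → ℝ) (ha : Summable fun i => |a i|) {α : ℝ} (hα : 0 ≤ α) :
    Summable fun i => max (|a i| - α) 0 := by
  refine ha.of_nonneg_of_le (fun i => le_max_right _ _) (fun i => ?_)
  exact max_le (by linarith [abs_nonneg (a i)]) (abs_nonneg _)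

/-- for a summable sequence `a`, the function
`φ(α) = ‖S_α(a)‖₁` is continuous and nonincreasing on `[0,∞)`,
`φ(0) = ‖a‖₁`, `φ(α) = 0` for `α ≥ supᵢ |aᵢ|`, and if `a ≠ 0` then `φ` is
strictly decreasing on `[0, supᵢ |aᵢ|]`. -/
theorem stmt4 (a : ℕ → ℝ) (ha : Summable fun i => |a i|) :
    ContinuousOn (phi a) (Set.Ici 0) ∧
    AntitoneOn (phi a) (Set.Ici 0) ∧
    phi a 0 = ∑' i, |a i| ∧
    (∀ α : ℝ, (⨆ i, |a i|) ≤ α → phi a α = 0) ∧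
    (a ≠ 0 → StrictAntiOn (phi a) (Set.Icc 0 (⨆ i, |a i|))) := by
  have hbdd : BddAbove (Set.range fun i => |a i|) := by
    refine ⟨∑' j, |a j|, ?_⟩
    rintro x ⟨i, rfl⟩
    exact Summable.le_tsum ha i (fun j _ => abs_nonneg _)
  refine ⟨?_, ?_, ?_, ?_, ?_⟩
  · -- continuity
    have hcont : Continuous fun x : ℝ => ∑' i, max (|a i| - max x 0) 0 := by
      refine continuous_tsum (fun i => ?_) ha (fun i x => ?_)
      · exact (continuous_const.sub (continuous_id.max continuous_const)).max continuous_const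
      · rw [Real.norm_eq_abs, abs_of_nonneg (le_max_right _ _)]
        exact max_le (by linarith [le_max_right x 0, abs_nonneg (a i)]) (abs_nonneg _)
    refine (hcont.continuousOn).congr (fun x hx => ?_)
    simp only [phi, max_eq_left (Set.mem_Ici.mp hx)]
  · -- antitone
    intro α hα β hβ hle
    exact Summable.tsum_le_tsum (fun i => max_le_max (by linarith) le_rfl)
      (phi_summable a ha hβ) (phi_summable a ha hα)
  · -- phi 0
    simp [phi, abs_nonneg]
  · -- phi α = 0 for sup ≤ α
    intro α hsup
    have : ∀ i, max (|a i| - α) 0 = 0 := fun i =>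
      max_eq_right (by linarith [le_ciSup hbdd i, hsup])
    simp [phi, this]
  · -- strict anti
    intro hne α hα β hβ hαβ
    have hβ0 : 0 ≤ β := hβ.1
    obtain ⟨i, hi⟩ := exists_lt_of_lt_ciSup (lt_of_lt_of_le hαβ hβ.2)
    refine Summable.tsum_lt_tsum (i := i) (fun j => max_le_max (by linarith) le_rfl) ?_
      (phi_summable a ha hβ0) (phi_summable a ha hα.1)
    have h1 : max (|a i| - α) 0 = |a i| - α := max_eq_left (by linarith)
    rcases le_or_gt (|a i|) β with h | h
    · rw [h1, max_eq_right (by linarith)]; linarith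
    · rw [h1, max_eq_left (by linarith)]; linarith
end
end

section
/- Let a ∈ ℓ² and R > 0, and let P_R denote the metric projection in ℓ² onto B_R = {x ∈ ℓ² : ‖x‖₁ ≤ R}. If ‖a‖₁ > R (including the case ‖a‖₁ = +∞), then there exists α > 0 such that ‖S_α(a)‖₁ = R, and for any such α one has P_R(a) = S_α(a). If ‖a‖₁ ≤ R, then P_R(a) = a. -/
open scoped ENNReal NNReal
open Filter

noncomputable section

/-- The `ℓ¹`-ball `B_R = {x ∈ ℓ² : ‖x‖₁ ≤ R}` inside `ℓ²`. -/
def BR (R : ℝ) : Set L2 := {x : L2 | l1norm x ≤ ENNReal.ofReal R}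

/-- `p` is the metric projection of `a` onto the set `S`:
it belongs to `S` and minimizes `x ↦ ‖x − a‖₂` over `S`. -/
def IsProj (S : Set L2) (a p : L2) : Prop :=
  p ∈ S ∧ ∀ z ∈ S, ‖p - a‖ ≤ ‖z - a‖

/-- Scalar soft-thresholding `S_α` with threshold `α`. -/
def sth (α t : ℝ) : ℝ :=
  if α ≤ t then t - α else if t ≤ -α then t + α else 0

lemma abs_sth {α : ℝ} (hα : 0 ≤ α) (t : ℝ) : |sth α t| = max (|t| - α) 0 := by
  unfold sth; split_ifs with h1 h2
  · rw [abs_of_nonneg (by linarith), abs_of_nonneg (by linarith),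
      max_eq_left (by linarith)]
  · rw [abs_of_nonpos (by linarith), abs_of_nonpos (by linarith),
      max_eq_left (by linarith)]; ring
  · rw [abs_zero, max_eq_right]; rcases abs_cases t with ⟨u,v⟩|⟨u,v⟩ <;> linarith

lemma abs_sub_sth_le {α : ℝ} (hα : 0 ≤ α) (t : ℝ) : |t - sth α t| ≤ α := by
  unfold sth; split_ifs with h1 h2 <;> rw [abs_le] <;> constructor <;> simp_all <;> linarith

lemma sub_mul_sth {α : ℝ} (hα : 0 ≤ α) (t : ℝ) :
    (t - sth α t) * sth α t = α * |sth α t| := by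
  unfold sth; split_ifs with h1 h2
  · rw [abs_of_nonneg (by linarith)]; ring
  · rw [abs_of_nonpos (by linarith)]; ring
  · simp

lemma sq_summable (a : L2) : Summable fun i => (a i)^2 := by
  have h := Memℓp.summable (E := fun _ : ℕ => ℝ) (p := 2) (by norm_num) a.property
  have h2 : ((2:ℝ≥0∞)).toReal = 2 := by norm_num
  rw [h2] at h
  simpa [Real.norm_eq_abs, sq_abs] using h

lemma abs_sth_le_sq {α : ℝ} (hα : 0 < α) (t : ℝ) : |sth α t| ≤ t^2 / α := by
  rw [abs_sth hα.le, le_div_iff₀ hα]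
  rcases max_cases (|t| - α) 0 with ⟨h1, h2⟩|⟨h1, h2⟩ <;> rw [h1] <;>
    rcases abs_cases t with ⟨u,v⟩|⟨u,v⟩ <;> nlinarith

lemma summable_abs_sth (a : L2) {α : ℝ} (hα : 0 < α) :
    Summable fun i => |sth α (a i)| := by
  refine Summable.of_nonneg_of_le (fun i => abs_nonneg _)
    (fun i => abs_sth_le_sq hα (a i)) ?_
  exact (sq_summable a).div_const α

lemma tsum_nnnorm_eq (f : ℕ → ℝ) (hf : Summable fun i => |f i|) :
    ∑' i, (‖f i‖₊ : ℝ≥0∞) = ENNReal.ofReal (∑' i, |f i|) := by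
  rw [ENNReal.ofReal_tsum_of_nonneg (fun i => abs_nonneg _) hf]
  congr 1; ext i
  rw [← Real.norm_eq_abs]; exact (ofReal_norm _).symm

def F (a : L2) (α : ℝ) : ℝ := ∑' i, |sth α (a i)|

lemma F_antitone (a : L2) {x y : ℝ} (hx : 0 < x) (hxy : x ≤ y) : F a y ≤ F a x := by
  refine Summable.tsum_le_tsum (fun i => ?_) (summable_abs_sth a (hx.trans_le hxy)) (summable_abs_sth a hx)
  rw [abs_sth (hx.trans_le hxy).le, abs_sth hx.le]
  exact max_le_max (by linarith) le_rfl

lemma exists_alpha (a : L2) (R : ℝ) (hR : 0 < R)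
    (h : ENNReal.ofReal R < ∑' i, (‖a i‖₊ : ℝ≥0∞)) :
    ∃ α : ℝ, 0 < α ∧ F a α = R := by
  -- get a finite set with big ℓ¹ mass
  rw [ENNReal.tsum_eq_iSup_sum, lt_iSup_iff] at h
  obtain ⟨s, hs⟩ := h
  have hsum_eq : ∑ i ∈ s, (‖a i‖₊ : ℝ≥0∞) = ENNReal.ofReal (∑ i ∈ s, |a i|) := by
    rw [ENNReal.ofReal_sum_of_nonneg (fun i _ => abs_nonneg _)]
    refine Finset.sum_congr rfl (fun i _ => ?_)
    rw [← Real.norm_eq_abs]; exact (ofReal_norm _).symm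
  set T : ℝ := ∑ i ∈ s, |a i| with hT
  have hTnn : 0 ≤ T := Finset.sum_nonneg (fun i _ => abs_nonneg _)
  have hRT : R < T := by
    by_contra hc
    push_neg at hc
    exact absurd (hs.trans_le (hsum_eq.le.trans (ENNReal.ofReal_le_ofReal hc))) (lt_irrefl _)
  -- small α₁ with F a α₁ > R
  set α₁ : ℝ := (T - R) / (s.card + 1) with hα₁
  have hα₁pos : 0 < α₁ := div_pos (by linarith) (by positivity)
  have hflo : R < F a α₁ := by
    have h1 : ∑ i ∈ s, |sth α₁ (a i)| ≤ F a α₁ :=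
      Summable.sum_le_tsum s (fun i _ => abs_nonneg _) (summable_abs_sth a hα₁pos)
    have h2 : ∑ i ∈ s, (|a i| - α₁) ≤ ∑ i ∈ s, |sth α₁ (a i)| := by
      refine Finset.sum_le_sum (fun i _ => ?_)
      rw [abs_sth hα₁pos.le]; exact le_max_left _ _
    have h3 : ∑ i ∈ s, (|a i| - α₁) = T - s.card * α₁ := by
      rw [Finset.sum_sub_distrib, hT, Finset.sum_const, nsmul_eq_mul]
    have he : α₁ * (s.card + 1) = T - R := div_mul_cancel₀ _ (by positivity)
    have h4 : (s.card : ℝ) * α₁ < T - R := by nlinarith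
    linarith
  -- large β with F a β < R
  set S : ℝ := ∑' i, (a i)^2 with hS
  have hSnn : 0 ≤ S := tsum_nonneg (fun i => sq_nonneg _)
  set β : ℝ := (S + 1) / R with hβ
  have hβpos : 0 < β := div_pos (by linarith) hR
  have hfhi : F a β < R := by
    have h1 : F a β ≤ ∑' i, (a i)^2 / β :=
      Summable.tsum_le_tsum (fun i => abs_sth_le_sq hβpos (a i)) (summable_abs_sth a hβpos)
        ((sq_summable a).div_const β)
    have h2 : ∑' i, (a i)^2 / β = S / β := by
      rw [tsum_div_const]
    have h3 : S / β < R := by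
      rw [hβ, div_div_eq_mul_div, div_lt_iff₀ (by positivity)]
      nlinarith
    linarith
  have hlohi : α₁ < β := by
    by_contra hc
    push_neg at hc
    have := F_antitone a hβpos hc
    linarith
  -- finite support set
  have hfin : {i : ℕ | α₁ ≤ |a i|}.Finite := by
    have h1 : ∀ᶠ i in Filter.cofinite, (a i)^2 < α₁^2 :=
      (sq_summable a).tendsto_cofinite_zero.eventually_lt_const (by positivity)
    refine (Filter.eventually_cofinite.mp h1).subset (fun i hi => ?_)
    simp only [Set.mem_setOf_eq, not_lt] at hi ⊢
    nlinarith [abs_nonneg (a i), sq_abs (a i)]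
  set t := hfin.toFinset with ht
  set G : ℝ → ℝ := fun γ => ∑ i ∈ t, max (|a i| - γ) 0 with hG
  have hFG : ∀ γ ∈ Set.Icc α₁ β, F a γ = G γ := by
    intro γ hγ
    have : F a γ = ∑' i, max (|a i| - γ) 0 :=
      tsum_congr (fun i => abs_sth (hα₁pos.trans_le hγ.1).le (a i))
    rw [this]
    refine tsum_eq_sum (fun i hi => ?_)
    rw [ht, Set.Finite.mem_toFinset] at hi
    simp only [Set.mem_setOf_eq, not_le] at hi
    exact max_eq_right (by linarith [hγ.1])
  have hGcont : Continuous G :=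
    continuous_finset_sum _ (fun i _ => (continuous_const.sub continuous_id).max continuous_const)
  have hmem : R ∈ Set.Icc (G β) (G α₁) := by
    rw [← hFG α₁ ⟨le_rfl, hlohi.le⟩, ← hFG β ⟨hlohi.le, le_rfl⟩]
    exact ⟨hfhi.le, hflo.le⟩
  obtain ⟨γ, hγmem, hγeq⟩ := intermediate_value_Icc' hlohi.le hGcont.continuousOn hmem
  exact ⟨γ, hα₁pos.trans_le hγmem.1, by rw [hFG γ hγmem, hγeq]⟩

lemma abs_sth_le_abs {α : ℝ} (hα : 0 ≤ α) (t : ℝ) : |sth α t| ≤ |t| := by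
  rw [abs_sth hα]
  exact max_le (by linarith) (abs_nonneg t)

lemma memℓp_sth (a : L2) {α : ℝ} (hα : 0 ≤ α) : Memℓp (fun i => sth α (a i)) 2 := by
  apply memℓp_gen
  have h2 : ((2:ℝ≥0∞)).toReal = ((2:ℕ):ℝ) := by norm_num
  rw [h2]
  simp only [Real.rpow_natCast]
  have hs := Memℓp.summable (E := fun _ : ℕ => ℝ) (p := 2) (by norm_num) a.property
  rw [h2] at hs
  simp only [Real.rpow_natCast] at hs
  refine Summable.of_nonneg_of_le (fun i => by positivity) (fun i => ?_) hs
  have := abs_sth_le_abs hα (a i)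
  have hnn : (0:ℝ) ≤ |sth α (a i)| := abs_nonneg _
  simp only [Real.norm_eq_abs]
  nlinarith [abs_nonneg (a i)]

lemma summable_abs_of_BR {R : ℝ} {z : L2} (hz : z ∈ BR R) : Summable fun i => |z i| := by
  have h1 : ∑' i, (‖z i‖₊ : ℝ≥0∞) ≠ ⊤ := (hz.trans_lt ENNReal.ofReal_lt_top).ne
  have h2 := ENNReal.tsum_coe_ne_top_iff_summable.mp h1
  have h3 := NNReal.summable_coe.mpr h2
  simpa [coe_nnnorm, Real.norm_eq_abs] using h3

lemma tsum_abs_le_of_BR {R : ℝ} (hR : 0 ≤ R) {z : L2} (hz : z ∈ BR R) :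
    ∑' i, |z i| ≤ R := by
  have hs := summable_abs_of_BR hz
  have h1 : ENNReal.ofReal (∑' i, |z i|) ≤ ENNReal.ofReal R := by
    rw [← tsum_nnnorm_eq _ hs]; exact hz
  exact (ENNReal.ofReal_le_ofReal_iff hR).mp h1

lemma proj_eq (a : L2) (R : ℝ) (hR : 0 < R) {α : ℝ} (hα : 0 < α)
    (hφ : (∑' i, (‖sth α (a i)‖₊ : ℝ≥0∞)) = ENNReal.ofReal R)
    (p : L2) (hp : IsProj (BR R) a p) : ∀ i, p i = sth α (a i) := by
  set q : L2 := ⟨fun i => sth α (a i), memℓp_sth a hα.le⟩ with hq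
  have hqcoe : ∀ i, q i = sth α (a i) := fun i => rfl
  have hsq : Summable fun i => |q i| := by
    simpa [hqcoe] using summable_abs_sth a hα
  have hl1q : ∑' i, |q i| = R := by
    have h1 := tsum_nnnorm_eq (fun i => q i) hsq
    have h2 : ENNReal.ofReal (∑' i, |q i|) = ENNReal.ofReal R := by
      rw [← h1]; exact hφ
    exact (ENNReal.ofReal_eq_ofReal_iff (tsum_nonneg fun i => abs_nonneg _) hR.le).mp h2
  have hqBR : q ∈ BR R := by
    show l1norm q ≤ ENNReal.ofReal R
    rw [l1norm]
    exact le_of_eq (by simpa [hqcoe] using hφ)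
  -- variational inequality
  have hvar : ∀ z ∈ BR R, (inner ℝ (a - q) (z - q) : ℝ) ≤ 0 := by
    intro z hz
    have hsz := summable_abs_of_BR hz
    rw [lp.inner_eq_tsum]
    have hterm : ∀ i, (inner ℝ ((a - q) i) ((z - q) i) : ℝ)
        = (a i - q i) * (z i - q i) := by
      intro i
      simp [lp.coeFn_sub, RCLike.inner_apply, starRingEnd_apply]; ring
    have hbound : ∀ i, (a i - q i) * (z i - q i) ≤ α * |z i| - α * |q i| := by
      intro i
      have hc : |a i - q i| ≤ α := by rw [hqcoe]; exact abs_sub_sth_le hα.le _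
      have hm : (a i - q i) * q i = α * |q i| := by rw [hqcoe]; exact sub_mul_sth hα.le _
      have h1 : (a i - q i) * z i ≤ α * |z i| := by
        calc (a i - q i) * z i ≤ |(a i - q i) * z i| := le_abs_self _
          _ = |a i - q i| * |z i| := abs_mul _ _
          _ ≤ α * |z i| := mul_le_mul_of_nonneg_right hc (abs_nonneg _)
      have : (a i - q i) * (z i - q i) = (a i - q i) * z i - (a i - q i) * q i := by ring
      rw [this, hm]
      linarith
    have hRHSsum : Summable fun i => α * |z i| - α * |q i| :=
      (hsz.mul_left α).sub (hsq.mul_left α)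
    have hLHSsum : Summable fun i => (inner ℝ ((a - q) i) ((z - q) i) : ℝ) :=
      lp.summable_inner _ _
    calc ∑' i, (inner ℝ ((a - q) i) ((z - q) i) : ℝ)
        ≤ ∑' i, (α * |z i| - α * |q i|) := by
          refine Summable.tsum_le_tsum (fun i => ?_) hLHSsum hRHSsum
          rw [hterm i]; exact hbound i
      _ = α * (∑' i, |z i|) - α * (∑' i, |q i|) := by
          rw [Summable.tsum_sub (hsz.mul_left α) (hsq.mul_left α), tsum_mul_left, tsum_mul_left]
      _ ≤ α * R - α * R := by
          rw [hl1q]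
          have := tsum_abs_le_of_BR hR.le hz
          nlinarith
      _ = 0 := by ring
  -- q is a minimizer
  have hqmin : ∀ z ∈ BR R, ‖q - a‖ ≤ ‖z - a‖ := by
    intro z hz
    have hexp : z - a = (z - q) + (q - a) := by abel
    have h1 : ‖z - a‖^2 = ‖z - q‖^2 + 2 * (inner ℝ (z - q) (q - a) : ℝ) + ‖q - a‖^2 := by
      rw [hexp]; exact norm_add_sq_real _ _
    have h2 : (inner ℝ (z - q) (q - a) : ℝ) = -(inner ℝ (a - q) (z - q) : ℝ) := by
      rw [real_inner_comm]
      rw [show q - a = -(a - q) by abel, inner_neg_left]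
    have h3 := hvar z hz
    nlinarith [norm_nonneg (z - q), norm_nonneg (q - a), norm_nonneg (z - a),
      sq_nonneg (‖z - q‖)]
  -- p = q
  have hpq : p = q := by
    have h1 : ‖p - a‖ ≤ ‖q - a‖ := hp.2 q hqBR
    have h2 : ‖q - a‖ ≤ ‖p - a‖ := hqmin p hp.1
    have hexp : p - a = (p - q) + (q - a) := by abel
    have h3 : ‖p - a‖^2 = ‖p - q‖^2 + 2 * (inner ℝ (p - q) (q - a) : ℝ) + ‖q - a‖^2 := by
      rw [hexp]; exact norm_add_sq_real _ _
    have h4 : (inner ℝ (p - q) (q - a) : ℝ) = -(inner ℝ (a - q) (p - q) : ℝ) := by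
      rw [real_inner_comm]
      rw [show q - a = -(a - q) by abel, inner_neg_left]
    have h5 := hvar p hp.1
    have h6 : ‖p - q‖^2 ≤ 0 := by
      nlinarith [norm_nonneg (p - q), norm_nonneg (p - a), norm_nonneg (q - a)]
    have h7 : ‖p - q‖ = 0 :=
      le_antisymm (by nlinarith [norm_nonneg (p - q)]) (norm_nonneg _)
    rw [norm_eq_zero, sub_eq_zero] at h7
    exact h7
  intro i
  rw [hpq]

/-- if `‖a‖₁ > R` (including `‖a‖₁ = ∞`), there exists `α > 0`
with `‖S_α(a)‖₁ = R`, and for any such `α` the projection of `a` onto `B_R`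
equals `S_α(a)` (componentwise); if `‖a‖₁ ≤ R`, the projection of `a` onto
`B_R` is `a` itself. -/
theorem stmt5 (a : L2) (R : ℝ) (hR : 0 < R) :
    ((ENNReal.ofReal R < l1norm a) →
      (∃ α : ℝ, 0 < α ∧ (∑' i, (‖sth α (a i)‖₊ : ℝ≥0∞)) = ENNReal.ofReal R) ∧
      (∀ α : ℝ, 0 < α → (∑' i, (‖sth α (a i)‖₊ : ℝ≥0∞)) = ENNReal.ofReal R →
        ∀ p : L2, IsProj (BR R) a p → ∀ i, p i = sth α (a i))) ∧
    (l1norm a ≤ ENNReal.ofReal R → IsProj (BR R) a a) := by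
  refine ⟨fun h => ?_, fun h => ⟨h, fun z _ => by simp [norm_nonneg]⟩⟩
  constructor
  · obtain ⟨α, hα, hFα⟩ := exists_alpha a R hR h
    refine ⟨α, hα, ?_⟩
    rw [tsum_nnnorm_eq _ (summable_abs_sth a hα)]
    rw [show (∑' i, |sth α (a i)|) = R from hFα]
  · intro α hα hφ p hp
    exact proj_eq a R hR hα hφ p hp
end
end

section
/- Let Y be a real Hilbert space, A : ℓ² → Y a bounded linear operator with adjoint A*, y^δ ∈ Y, λ > 0, α > 0, β ≥ 0, and x ∈ ℓ² with x ≠ 0. Then the functional C(z) = ⟨A*(Ax − y^δ) − λx − (β/‖x‖₂)x, z⟩ + (λ/2)‖z‖₂² + α‖z‖₁ has a unique minimizer over ℓ², given by the soft-thresholding formula ẑ = S_{α/λ}( (β/(λ‖x‖₂) + 1)x − (1/λ)A*(Ax − y^δ) ). -/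
open scoped ENNReal NNReal RealInnerProductSpace
open Filter

noncomputable section
set_option maxHeartbeats 1000000

lemma sth_key {c u : ℝ} (hc : 0 ≤ c) (t : ℝ) :
    (sth c u - u)^2 / 2 + c * |sth c u| + (t - sth c u)^2 / 2 ≤ (t - u)^2 / 2 + c * |t| := by
  unfold sth
  split_ifs with h1 h2
  · rw [abs_of_nonneg (by linarith)]
    nlinarith [le_abs_self t, neg_abs_le t]
  · rw [abs_of_nonpos (by linarith)]
    nlinarith [le_abs_self t, neg_abs_le t]
  · push_neg at h1 h2
    simp only [abs_zero]
    nlinarith [mul_nonneg (sub_nonneg.2 (le_abs_self t)) (by linarith : 0 ≤ c + u),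
      mul_nonneg (by linarith [neg_abs_le t] : 0 ≤ |t| + t) (by linarith : 0 ≤ c - u)]

lemma sth_key' {lam α : ℝ} (hlam : 0 < lam) (hα : 0 ≤ α) (u t : ℝ) :
    lam/2*(sth (α/lam) u - u)^2 + α*|sth (α/lam) u| + lam/2*(t - sth (α/lam) u)^2
      ≤ lam/2*(t-u)^2 + α*|t| := by
  have h := sth_key (div_nonneg hα hlam.le) (u := u) t
  have e1 : lam * (α/lam * |sth (α/lam) u|) = α * |sth (α/lam) u| := by
    field_simp
  have e2 : lam * (α/lam * |t|) = α * |t| := by field_simp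
  nlinarith [mul_le_mul_of_nonneg_left h hlam.le]

lemma L2.norm_sq_eq (w : L2) : ‖w‖^2 = ∑' i, (w i)^2 := by
  have h := lp.norm_rpow_eq_tsum (p := 2) (by norm_num) w
  rw [ENNReal.toReal_ofNat] at h
  calc ‖w‖^2 = ‖w‖ ^ (2:ℝ) := by rw [← Real.rpow_natCast]; norm_num
    _ = ∑' i, ‖w i‖ ^ (2:ℝ) := h
    _ = ∑' i, (w i)^2 := by
        apply tsum_congr; intro i
        rw [show (2:ℝ) = ((2:ℕ):ℝ) from by norm_num, Real.rpow_natCast,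
          Real.norm_eq_abs, sq_abs]

lemma L2.summable_sq (w : L2) : Summable fun i => (w i)^2 := by
  have h := (memℓp_gen_iff (p := 2) (by norm_num)).1 (lp.memℓp w)
  rw [ENNReal.toReal_ofNat] at h
  have : (fun i => ‖w i‖ ^ (2:ℝ)) = fun i => (w i)^2 := by
    ext i
    rw [show (2:ℝ) = ((2:ℕ):ℝ) from by norm_num, Real.rpow_natCast,
      Real.norm_eq_abs, sq_abs]
  rwa [this] at h

lemma sth_support_finite {c : ℝ} (hc : 0 < c) (u : L2) :
    Set.Finite {i | sth c (u i) ≠ 0} := by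
  have h0 : Tendsto (fun i => (u i)^2) cofinite (nhds 0) :=
    (L2.summable_sq u).tendsto_cofinite_zero
  have h : ∀ᶠ i in cofinite, sth c (u i) = 0 := by
    filter_upwards [h0.eventually (gt_mem_nhds (show (0:ℝ) < c^2 by positivity))] with i hi
    unfold sth
    have h1 : ¬ c ≤ u i := by nlinarith
    have h2 : ¬ u i ≤ -c := by nlinarith
    simp [h1, h2]
  simpa [Filter.eventually_cofinite] using h

lemma coe_ennreal_fin {x : ℝ≥0∞} (hx : x ≠ ⊤) : (x : EReal) = ((x.toReal : ℝ) : EReal) := by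
  conv_lhs => rw [← ENNReal.ofReal_toReal hx]
  rw [EReal.coe_ennreal_ofReal, max_eq_left ENNReal.toReal_nonneg]

lemma l1norm_toReal {z : L2} (hz : l1norm z ≠ ⊤) :
    (l1norm z).toReal = ∑' i, |z i| := by
  have hs : Summable fun i => ‖z i‖₊ := ENNReal.tsum_coe_ne_top_iff_summable.1 hz
  rw [l1norm, ← ENNReal.coe_tsum hs, ENNReal.coe_toReal, NNReal.coe_tsum]
  apply tsum_congr; intro i; simp [Real.norm_eq_abs]

lemma l1norm_summable {z : L2} (hz : l1norm z ≠ ⊤) : Summable fun i => |z i| := by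
  have hs : Summable fun i => ‖z i‖₊ := ENNReal.tsum_coe_ne_top_iff_summable.1 hz
  have := NNReal.summable_coe.2 hs
  simpa [Real.norm_eq_abs] using this

/-- The main real inequality. -/
lemma key_ineq {lam α : ℝ} (hlam : 0 < lam) (hα : 0 ≤ α) (u zh z : L2)
    (hzh : ∀ i, zh i = sth (α/lam) (u i))
    (hz1 : Summable fun i => |z i|) (hzh1 : Summable fun i => |zh i|) :
    lam/2 * ‖zh - u‖^2 + α * ∑' i, |zh i| + lam/2 * ‖z - zh‖^2
      ≤ lam/2 * ‖z - u‖^2 + α * ∑' i, |z i| := by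
  have esub : ∀ (a b : L2) i, (a - b) i = a i - b i := by
    intro a b i; simp
  have s1 : Summable fun i => (zh i - u i)^2 := by
    have := L2.summable_sq (zh - u); simpa [esub] using this
  have s2 : Summable fun i => (z i - zh i)^2 := by
    have := L2.summable_sq (z - zh); simpa [esub] using this
  have s3 : Summable fun i => (z i - u i)^2 := by
    have := L2.summable_sq (z - u); simpa [esub] using this
  have e1 : ‖zh - u‖^2 = ∑' i, (zh i - u i)^2 := by
    rw [L2.norm_sq_eq]; exact tsum_congr fun i => by rw [esub]
  have e2 : ‖z - zh‖^2 = ∑' i, (z i - zh i)^2 := by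
    rw [L2.norm_sq_eq]; exact tsum_congr fun i => by rw [esub]
  have e3 : ‖z - u‖^2 = ∑' i, (z i - u i)^2 := by
    rw [L2.norm_sq_eq]; exact tsum_congr fun i => by rw [esub]
  rw [e1, e2, e3]
  simp only [← tsum_mul_left]
  rw [← Summable.tsum_add (s1.mul_left _) (hzh1.mul_left _),
    ← Summable.tsum_add ((s1.mul_left _).add (hzh1.mul_left _)) (s2.mul_left _),
    ← Summable.tsum_add (s3.mul_left _) (hz1.mul_left _)]
  apply Summable.tsum_le_tsum _ (((s1.mul_left _).add (hzh1.mul_left _)).add (s2.mul_left _))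
    ((s3.mul_left _).add (hz1.mul_left _))
  intro i
  rw [hzh i]
  exact sth_key' hlam hα (u i) (z i)


def Cfun (b : L2) (lam α : ℝ) (z : L2) : EReal :=
  ((⟪b, z⟫ + lam / 2 * ‖z‖ ^ 2 : ℝ) : EReal) +
    ((ENNReal.ofReal α * l1norm z : ℝ≥0∞) : EReal)

lemma Cfun_fin (b : L2) {lam α : ℝ} (hα : 0 ≤ α) {z : L2} (hz : l1norm z ≠ ⊤) :
    Cfun b lam α z = ((⟪b, z⟫ + lam / 2 * ‖z‖ ^ 2 + α * ∑' i, |z i| : ℝ) : EReal) := by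
  rw [Cfun]
  have hne : ENNReal.ofReal α * l1norm z ≠ ⊤ :=
    ENNReal.mul_ne_top ENNReal.ofReal_ne_top hz
  rw [coe_ennreal_fin hne, ← EReal.coe_add, ENNReal.toReal_mul,
    ENNReal.toReal_ofReal hα, l1norm_toReal hz]

lemma Cfun_top (b : L2) {lam α : ℝ} (hα : 0 < α) {z : L2} (hz : l1norm z = ⊤) :
    Cfun b lam α z = ⊤ := by
  rw [Cfun, hz, ENNReal.mul_top (by simp [ENNReal.ofReal_eq_zero]; linarith),
    EReal.coe_ennreal_top, EReal.add_top_of_ne_bot (EReal.coe_ne_bot _)]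

/-- the functional
`C(z) = ⟨A*(Ax − y^δ) − λx − (β/‖x‖₂)x, z⟩ + (λ/2)‖z‖₂² + α‖z‖₁`
(with values in `(-∞,∞]` since `‖z‖₁` may be infinite) has a unique minimizer
over `ℓ²`, given componentwise by the soft-thresholding formula
`ẑ = S_{α/λ}((β/(λ‖x‖₂) + 1)x − (1/λ)A*(Ax − y^δ))`. -/
theorem stmt8 {Y : Type*} [NormedAddCommGroup Y] [InnerProductSpace ℝ Y]
    [CompleteSpace Y]
    (A : L2 →L[ℝ] Y) (yδ : Y) (lam α β : ℝ) (hlam : 0 < lam) (hα : 0 < α)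
    (hβ : 0 ≤ β) (x : L2) (hx : x ≠ 0) :
    letI C : L2 → EReal := fun z =>
      ((⟪ContinuousLinearMap.adjoint A (A x - yδ) - lam • x - (β / ‖x‖) • x, z⟫ +
          (lam / 2) * ‖z‖ ^ 2 : ℝ) : EReal) +
        ((ENNReal.ofReal α * l1norm z : ℝ≥0∞) : EReal)
    letI u : L2 := (β / (lam * ‖x‖) + 1) • x -
      (1 / lam) • ContinuousLinearMap.adjoint A (A x - yδ)
    ∃ zhat : L2, (∀ i, zhat i = sth (α / lam) (u i)) ∧
      (∀ z : L2, C zhat ≤ C z) ∧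
      (∀ z : L2, (∀ w : L2, C z ≤ C w) → z = zhat) := by
  set u : L2 := (β / (lam * ‖x‖) + 1) • x -
      (1 / lam) • ContinuousLinearMap.adjoint A (A x - yδ) with hu
  set b : L2 := ContinuousLinearMap.adjoint A (A x - yδ) - lam • x - (β / ‖x‖) • x
    with hbdef
  have hnx : ‖x‖ ≠ 0 := norm_ne_zero_iff.mpr hx
  have hb : b = -(lam • u) := by
    rw [hbdef, hu]
    match_scalars <;> field_simp <;> try ring
  -- the candidate minimizer
  have hfin : Set.Finite {i | sth (α/lam) (u i) ≠ 0} :=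
    sth_support_finite (div_pos hα hlam) u
  set zhat : L2 := ⟨fun i => sth (α/lam) (u i),
    (memℓp_zero hfin).of_exponent_ge zero_le⟩ with hzhdef
  have hzh : ∀ i, zhat i = sth (α/lam) (u i) := fun i => rfl
  -- finiteness of l1norm zhat
  have hzhtop : l1norm zhat ≠ ⊤ := by
    rw [l1norm, ENNReal.tsum_coe_ne_top_iff_summable]
    apply summable_of_ne_finset_zero (s := hfin.toFinset)
    intro i hi
    have h0 : sth (α/lam) (u i) = 0 := by simpa using hi
    simp [hzh i, h0]
  -- quadratic expansion
  have hquad : ∀ z : L2, ⟪b, z⟫ + lam/2 * ‖z‖^2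
      = lam/2 * ‖z - u‖^2 - lam/2 * ‖u‖^2 := by
    intro z
    rw [hb]
    have h1 : ⟪-(lam • u), z⟫ = -(lam * ⟪u, z⟫) := by
      rw [inner_neg_left, real_inner_smul_left]
    have h2 : ‖z - u‖^2 = ‖z‖^2 - 2 * ⟪z, u⟫ + ‖u‖^2 := norm_sub_sq_real z u
    have h3 : ⟪u, z⟫ = ⟪z, u⟫ := real_inner_comm z u
    rw [h1, h3]
    linear_combination (-(lam/2)) * h2
  -- the main real inequality
  have hmain : ∀ z : L2, l1norm z ≠ ⊤ →
      (⟪b, zhat⟫ + lam/2 * ‖zhat‖^2 + α * ∑' i, |zhat i|) + lam/2 * ‖z - zhat‖^2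
        ≤ ⟪b, z⟫ + lam/2 * ‖z‖^2 + α * ∑' i, |z i| := by
    intro z hz
    have h := key_ineq hlam hα.le u zhat z hzh (l1norm_summable hz)
      (l1norm_summable hzhtop)
    rw [hquad zhat, hquad z]
    linarith
  refine ⟨zhat, hzh, ?_, ?_⟩
  · intro z
    show Cfun b lam α zhat ≤ Cfun b lam α z
    by_cases hz : l1norm z = ⊤
    · rw [Cfun_top b hα hz]; exact le_top
    · rw [Cfun_fin b hα.le hz, Cfun_fin b hα.le hzhtop, EReal.coe_le_coe_iff]
      nlinarith [hmain z hz, sq_nonneg ‖z - zhat‖, hlam]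
  · intro z hmin
    have h1 : Cfun b lam α z ≤ Cfun b lam α zhat := hmin zhat
    have hz : l1norm z ≠ ⊤ := by
      intro hz
      rw [Cfun_top b hα hz, Cfun_fin b hα.le hzhtop] at h1
      exact EReal.coe_ne_top _ (top_le_iff.1 h1)
    rw [Cfun_fin b hα.le hz, Cfun_fin b hα.le hzhtop, EReal.coe_le_coe_iff] at h1
    have h2 := hmain z hz
    have h3 : ‖z - zhat‖^2 ≤ 0 := by nlinarith
    have h4 : ‖z - zhat‖ = 0 := by
      nlinarith [sq_nonneg ‖z - zhat‖, norm_nonneg (z - zhat)]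
    rw [norm_eq_zero, sub_eq_zero] at h4
    exact h4
end
end

section
/- Let A : ℝⁿ → ℝᵐ be linear, y^δ ∈ ℝᵐ, β ≥ 0, λ > 0, R > 0. Let (x^k) be a sequence in B_R = {x ∈ ℝⁿ : ‖x‖₁ ≤ R} with x^k ≠ 0 for all k, satisfying x^{k+1} = P_R( x^k + βx^{k+1}/(λ‖x^{k+1}‖₂) − (1/λ)Aᵀ(Ax^k − y^δ) ) for all k, and assume ‖x^{k+1} − x^k‖₂ → 0. Then (x^k) has a subsequence converging to some x* ∈ B_R, and whenever x* ≠ 0 is the limit of a convergent subsequence of (x^k), x* is a stationary point of ½‖Ax − y^δ‖₂² − β‖x‖₂ on B_R, i.e. ⟨βx*/‖x*‖₂ − Aᵀ(Ax* − y^δ), w − x*⟩ ≤ 0 for all w ∈ B_R. -/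
open scoped RealInnerProductSpace BigOperators
open Filter

noncomputable section

/-- The `ℓ¹`-norm on `ℝⁿ`. -/
def l1E {n : ℕ} (x : EuclideanSpace ℝ (Fin n)) : ℝ := ∑ i, |x i|

/-- The `ℓ¹`-ball `B_R = {x ∈ ℝⁿ : ‖x‖₁ ≤ R}`. -/
def BRE (n : ℕ) (R : ℝ) : Set (EuclideanSpace ℝ (Fin n)) := {x | l1E x ≤ R}

/-- `p` is the Euclidean projection of `a` onto the set `S`. -/
def IsProjE {n : ℕ} (S : Set (EuclideanSpace ℝ (Fin n)))
    (a p : EuclideanSpace ℝ (Fin n)) : Prop :=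
  p ∈ S ∧ ∀ z ∈ S, ‖p - a‖ ≤ ‖z - a‖

lemma convex_BRE (n : ℕ) (R : ℝ) : Convex ℝ (BRE n R) := by
  intro u hu v hv a b ha hb hab
  simp only [BRE, Set.mem_setOf_eq, l1E] at *
  calc ∑ i, |(a • u + b • v) i| ≤ ∑ i, (a * |u i| + b * |v i|) := by
        refine Finset.sum_le_sum fun i _ => ?_
        simp only [PiLp.add_apply, PiLp.smul_apply, smul_eq_mul]
        calc |a * u i + b * v i| ≤ |a * u i| + |b * v i| := abs_add_le _ _
          _ = a * |u i| + b * |v i| := by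
              rw [abs_mul, abs_mul, abs_of_nonneg ha, abs_of_nonneg hb]
    _ = a * (∑ i, |u i|) + b * (∑ i, |v i|) := by
        rw [Finset.sum_add_distrib, Finset.mul_sum, Finset.mul_sum]
    _ ≤ a * R + b * R := by gcongr
    _ = R := by rw [← add_mul, hab, one_mul]

lemma norm_le_l1E {n : ℕ} (x : EuclideanSpace ℝ (Fin n)) : ‖x‖ ≤ l1E x := by
  rw [EuclideanSpace.norm_eq]
  simp only [Real.norm_eq_abs]
  calc Real.sqrt (∑ i, |x i| ^ 2) ≤ Real.sqrt ((∑ i, |x i|) ^ 2) :=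
        Real.sqrt_le_sqrt (Finset.sum_sq_le_sq_sum_of_nonneg fun i _ => abs_nonneg _)
    _ = ∑ i, |x i| := Real.sqrt_sq (Finset.sum_nonneg fun i _ => abs_nonneg _)

lemma isCompact_BRE (n : ℕ) (R : ℝ) : IsCompact (BRE n R) := by
  have hcont : Continuous (l1E (n := n)) := by
    unfold l1E
    exact continuous_finset_sum _ fun i _ =>
      continuous_abs.comp (EuclideanSpace.proj (𝕜 := ℝ) i).continuous
  have hclosed : IsClosed (BRE n R) := IsClosed.preimage hcont isClosed_Iic
  have hbdd : Bornology.IsBounded (BRE n R) := by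
    refine (Metric.isBounded_closedBall (x := (0 : EuclideanSpace ℝ (Fin n))) (r := R)).subset ?_
    intro z hz
    simp only [Metric.mem_closedBall, dist_zero_right]
    exact (norm_le_l1E z).trans hz
  exact Metric.isCompact_of_isClosed_isBounded hclosed hbdd

lemma proj_inner' {n : ℕ} {S : Set (EuclideanSpace ℝ (Fin n))} (hS : Convex ℝ S)
    {a p : EuclideanSpace ℝ (Fin n)} (hp : p ∈ S)
    (h2 : ∀ z ∈ S, ‖p - a‖ ≤ ‖z - a‖) :
    ∀ w ∈ S, ⟪a - p, w - p⟫ ≤ 0 := by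
  intro w hw
  set c : ℝ := ⟪p - a, w - p⟫ with hc
  set d : ℝ := ‖w - p‖ ^ 2 with hd
  have key : ∀ t : ℝ, 0 < t → t ≤ 1 → 0 ≤ 2 * c + t * d := by
    intro t ht ht1
    have hz : p + t • (w - p) ∈ S := by
      have h := hS hp hw (by linarith : (0:ℝ) ≤ 1 - t) ht.le (by ring)
      convert h using 1
      module
    have hle := h2 _ hz
    have hsq : ‖p - a‖ ^ 2 ≤ ‖p + t • (w - p) - a‖ ^ 2 := by
      rw [norm_sub_rev, norm_sub_rev _ a] at hle ⊢
      exact pow_le_pow_left₀ (norm_nonneg _) hle 2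
    have hrw : p + t • (w - p) - a = (p - a) + t • (w - p) := by module
    rw [hrw, norm_add_sq_real, real_inner_smul_right, norm_smul,
      Real.norm_eq_abs, abs_of_pos ht, mul_pow] at hsq
    nlinarith [sq_nonneg t, norm_nonneg (w - p)]
  have hlim : Tendsto (fun k : ℕ => 2 * c + (1 / (k + 1 : ℝ)) * d) atTop
      (nhds (2 * c)) := by
    have h0 : Tendsto (fun k : ℕ => (1 / (k + 1 : ℝ)) * d) atTop (nhds 0) := by
      simpa using tendsto_one_div_add_atTop_nhds_zero_nat.mul_const d
    simpa using (tendsto_const_nhds (x := 2 * c)).add h0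
  have h0 : 0 ≤ 2 * c := by
    refine ge_of_tendsto' hlim fun k => key _ ?_ ?_
    · positivity
    · rw [div_le_one (by positivity)]; linarith [Nat.cast_nonneg (α := ℝ) k]
  have hfin : ⟪a - p, w - p⟫ = -c := by
    rw [hc, ← inner_neg_left, neg_sub]
  rw [hfin]; linarith

theorem stmt14 {n m : ℕ}
    (A : EuclideanSpace ℝ (Fin n) →L[ℝ] EuclideanSpace ℝ (Fin m))
    (yδ : EuclideanSpace ℝ (Fin m)) (β lam R : ℝ) (hβ : 0 ≤ β) (hlam : 0 < lam)
    (hR : 0 < R)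
    (x : ℕ → EuclideanSpace ℝ (Fin n))
    (hmem : ∀ k, x k ∈ BRE n R)
    (hne : ∀ k, x k ≠ 0)
    (hfix : ∀ k, IsProjE (BRE n R)
      (x k + (β / (lam * ‖x (k + 1)‖)) • x (k + 1) -
        (1 / lam) • ContinuousLinearMap.adjoint A (A (x k) - yδ)) (x (k + 1)))
    (hdiff : Tendsto (fun k => ‖x (k + 1) - x k‖) atTop (nhds 0)) :
    (∃ (φ : ℕ → ℕ) (xstar : EuclideanSpace ℝ (Fin n)), StrictMono φ ∧
      xstar ∈ BRE n R ∧ Tendsto (fun j => x (φ j)) atTop (nhds xstar)) ∧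
    (∀ xstar : EuclideanSpace ℝ (Fin n), xstar ≠ 0 →
      (∃ φ : ℕ → ℕ, StrictMono φ ∧ Tendsto (fun j => x (φ j)) atTop (nhds xstar)) →
      ∀ w ∈ BRE n R,
        ⟪(β / ‖xstar‖) • xstar - ContinuousLinearMap.adjoint A (A xstar - yδ),
          w - xstar⟫ ≤ 0) := by
  constructor
  · obtain ⟨xstar, hxs, φ, hφ, hconv⟩ := (isCompact_BRE n R).tendsto_subseq hmem
    exact ⟨φ, xstar, hφ, hxs, hconv⟩
  · rintro xstar hxs0 ⟨φ, hφ, hconv⟩ w hw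
    -- the successor subsequence also converges to xstar
    have hφ1 : Tendsto (fun j => ‖x (φ j + 1) - x (φ j)‖) atTop (nhds 0) :=
      hdiff.comp hφ.tendsto_atTop
    have hdiff0 : Tendsto (fun j => x (φ j + 1) - x (φ j)) atTop (nhds 0) :=
      tendsto_zero_iff_norm_tendsto_zero.mpr hφ1
    have h2 : Tendsto (fun j => x (φ j + 1)) atTop (nhds xstar) := by
      have := hconv.add hdiff0
      simp only [add_zero] at this
      convert this using 1
      funext j; abel
    have h3 : Tendsto (fun j => ‖x (φ j + 1)‖) atTop (nhds ‖xstar‖) := h2.norm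
    have hden : lam * ‖xstar‖ ≠ 0 :=
      mul_ne_zero hlam.ne' (norm_ne_zero_iff.mpr hxs0)
    have h4 : Tendsto (fun j => β / (lam * ‖x (φ j + 1)‖)) atTop
        (nhds (β / (lam * ‖xstar‖))) :=
      tendsto_const_nhds.div (tendsto_const_nhds.mul h3) hden
    have h5 : Tendsto (fun j => (β / (lam * ‖x (φ j + 1)‖)) • x (φ j + 1)) atTop
        (nhds ((β / (lam * ‖xstar‖)) • xstar)) := h4.smul h2
    have h6 : Tendsto (fun j => (1 / lam) •
        ContinuousLinearMap.adjoint A (A (x (φ j)) - yδ)) atTop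
        (nhds ((1 / lam) • ContinuousLinearMap.adjoint A (A xstar - yδ))) := by
      have hA : Tendsto (fun j => A (x (φ j)) - yδ) atTop (nhds (A xstar - yδ)) :=
        ((A.continuous.tendsto xstar).comp hconv).sub tendsto_const_nhds
      exact (((ContinuousLinearMap.adjoint A).continuous.tendsto _).comp hA).const_smul _
    set L : EuclideanSpace ℝ (Fin n) :=
      (β / (lam * ‖xstar‖)) • xstar - (1 / lam) • ContinuousLinearMap.adjoint A (A xstar - yδ)
      with hL
    have hg : Tendsto (fun j =>
        (x (φ j) + (β / (lam * ‖x (φ j + 1)‖)) • x (φ j + 1) -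
          (1 / lam) • ContinuousLinearMap.adjoint A (A (x (φ j)) - yδ)) - x (φ j + 1))
        atTop (nhds L) := by
      have := ((hconv.add h5).sub h6).sub h2
      convert this using 2
      rw [hL]; abel
    have hinner : Tendsto (fun j =>
        ⟪(x (φ j) + (β / (lam * ‖x (φ j + 1)‖)) • x (φ j + 1) -
          (1 / lam) • ContinuousLinearMap.adjoint A (A (x (φ j)) - yδ)) - x (φ j + 1),
          w - x (φ j + 1)⟫) atTop (nhds ⟪L, w - xstar⟫) :=
      hg.inner (tendsto_const_nhds.sub h2)
    have hle : ⟪L, w - xstar⟫ ≤ 0 := by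
      refine le_of_tendsto hinner (Eventually.of_forall fun j => ?_)
      exact proj_inner' (convex_BRE n R) (hfix (φ j)).1 (hfix (φ j)).2 w hw
    -- rescale by lam
    have hLrw : L = (1 / lam) • ((β / ‖xstar‖) • xstar -
        ContinuousLinearMap.adjoint A (A xstar - yδ)) := by
      rw [hL, smul_sub, smul_smul]
      congr 2
      field_simp
    rw [hLrw, real_inner_smul_left] at hle
    have h1lam : 0 < 1 / lam := by positivity
    nlinarith [hle, h1lam]
end
end

section
/- Let Y be a real normed space, A : ℓ² → Y bounded linear, δ > 0, τ₁ > 1, η ∈ [0,1], and y, y^δ ∈ Y with ‖y − y^δ‖_Y ≤ δ. Assume there exists x† ∈ ℓ² with ‖x†‖₁ < ∞ and Ax† = y. Define J_α(x) = ½‖Ax − y^δ‖_Y² + α(‖x‖₁ − η‖x‖₂). Then every minimizer x_α of J_α over ℓ² satisfies ‖Ax_α − y^δ‖_Y² ≤ δ² + 2α(‖x†‖₁ − η‖x†‖₂); consequently there exists α₁ > 0 such that every minimizer x of J_{α₁} satisfies ‖Ax − y^δ‖_Y < τ₁ δ. -/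
open scoped ENNReal NNReal
open Filter

noncomputable section

/-- The penalty `R_η(x) = ‖x‖₁ − η‖x‖₂`, valued in `[0,∞]`. -/
def Reta (η : ℝ) (x : L2) : ℝ≥0∞ := l1norm x - ENNReal.ofReal (η * ‖x‖)

lemma l2_le_l1 (x : L2) (h : l1norm x < ⊤) : ‖x‖ ≤ (l1norm x).toReal := by
  have hsum : Summable (fun i => ‖x i‖) := by
    have := ENNReal.tsum_coe_ne_top_iff_summable.mp h.ne
    exact NNReal.summable_coe.mpr this
  have hS : (l1norm x).toReal = ∑' i, ‖x i‖ := by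
    rw [l1norm, ENNReal.tsum_toReal_eq (fun _ => ENNReal.coe_ne_top)]
    simp [coe_nnnorm]
  set S := (l1norm x).toReal with hSdef
  have hS0 : 0 ≤ S := ENNReal.toReal_nonneg
  have hterm : ∀ i, ‖x i‖ ≤ S := by
    intro i
    rw [hS]
    exact Summable.le_tsum hsum i (fun j _ => norm_nonneg _)
  have hsq : ‖x‖ ^ 2 = ∑' i, ‖x i‖ ^ 2 := by
    have hp : 0 < (2 : ℝ≥0∞).toReal := by norm_num
    have := lp.norm_rpow_eq_tsum hp x
    simpa [ENNReal.toReal_ofNat, Real.rpow_natCast, Real.rpow_two, Real.norm_eq_abs, sq_abs] using this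
  have hsum2 : Summable (fun i => ‖x i‖ ^ 2) := by
    have := lp.memℓp x
    rw [memℓp_gen_iff (by norm_num : 0 < (2:ℝ≥0∞).toReal)] at this
    simpa [Real.rpow_natCast, Real.rpow_two, Real.norm_eq_abs, sq_abs] using this
  have h1 : ∑' i, ‖x i‖ ^ 2 ≤ ∑' i, S * ‖x i‖ := by
    refine Summable.tsum_le_tsum (fun i => ?_) hsum2 (hsum.mul_left S)
    have := hterm i
    nlinarith [norm_nonneg (x i)]
  have h2 : ∑' i, S * ‖x i‖ = S ^ 2 := by
    rw [tsum_mul_left, ← hS]; ring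
  nlinarith [norm_nonneg x]


/-- if `Ax† = y` with `‖x†‖₁ < ∞` and `‖y − y^δ‖ ≤ δ`, then
every minimizer `x_α` of `J_α(x) = ½‖Ax − y^δ‖² + α(‖x‖₁ − η‖x‖₂)` satisfies
`‖Ax_α − y^δ‖² ≤ δ² + 2α(‖x†‖₁ − η‖x†‖₂)`; consequently there exists
`α₁ > 0` such that every minimizer `x` of `J_{α₁}` satisfies
`‖Ax − y^δ‖ < τ₁δ`. -/
theorem stmt16 {Y : Type*} [NormedAddCommGroup Y] [NormedSpace ℝ Y]
    (A : L2 →L[ℝ] Y) (δ τ₁ η : ℝ) (hδ : 0 < δ) (hτ₁ : 1 < τ₁)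
    (hη : η ∈ Set.Icc (0 : ℝ) 1) (y yδ : Y) (hnoise : ‖y - yδ‖ ≤ δ)
    (xdag : L2) (hfin : l1norm xdag < ⊤) (hsol : A xdag = y) :
    letI J : ℝ → L2 → ℝ≥0∞ := fun α x =>
      ENNReal.ofReal ((1 / 2) * ‖A x - yδ‖ ^ 2) + ENNReal.ofReal α * Reta η x
    (∀ α : ℝ, 0 < α → ∀ xα : L2, (∀ z : L2, J α xα ≤ J α z) →
      ‖A xα - yδ‖ ^ 2 ≤ δ ^ 2 + 2 * α * ((l1norm xdag).toReal - η * ‖xdag‖)) ∧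
    (∃ α₁ : ℝ, 0 < α₁ ∧ ∀ x : L2, (∀ z : L2, J α₁ x ≤ J α₁ z) →
      ‖A x - yδ‖ < τ₁ * δ) := by
  set J : ℝ → L2 → ℝ≥0∞ := fun α x =>
      ENNReal.ofReal ((1 / 2) * ‖A x - yδ‖ ^ 2) + ENNReal.ofReal α * Reta η x with hJ
  obtain ⟨hη0, hη1⟩ := hη
  set C : ℝ := (l1norm xdag).toReal - η * ‖xdag‖ with hCdef
  have hl2l1 : ‖xdag‖ ≤ (l1norm xdag).toReal := l2_le_l1 xdag hfin
  have hηx : η * ‖xdag‖ ≤ (l1norm xdag).toReal := by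
    nlinarith [norm_nonneg xdag]
  have hC0 : 0 ≤ C := by simp [hCdef]; linarith
  have hb : ENNReal.ofReal (η * ‖xdag‖) ≤ l1norm xdag := by
    calc ENNReal.ofReal (η * ‖xdag‖) ≤ ENNReal.ofReal ((l1norm xdag).toReal) :=
          ENNReal.ofReal_le_ofReal hηx
      _ = l1norm xdag := ENNReal.ofReal_toReal hfin.ne
  have hRfin : Reta η xdag ≠ ⊤ := (lt_of_le_of_lt tsub_le_self hfin).ne
  have hRval : (Reta η xdag).toReal = C := by
    rw [Reta, ENNReal.toReal_sub_of_le hb hfin.ne,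
      ENNReal.toReal_ofReal (by nlinarith [norm_nonneg xdag])]
  -- Part 1
  have part1 : ∀ α : ℝ, 0 < α → ∀ xα : L2, (∀ z : L2, J α xα ≤ J α z) →
      ‖A xα - yδ‖ ^ 2 ≤ δ ^ 2 + 2 * α * C := by
    intro α hα xα hmin
    have hkey : ENNReal.ofReal ((1 / 2) * ‖A xα - yδ‖ ^ 2) ≤
        ENNReal.ofReal ((1 / 2) * δ ^ 2) + ENNReal.ofReal α * Reta η xdag := by
      calc ENNReal.ofReal ((1 / 2) * ‖A xα - yδ‖ ^ 2) ≤ J α xα := le_self_add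
        _ ≤ J α xdag := hmin xdag
        _ ≤ ENNReal.ofReal ((1 / 2) * δ ^ 2) + ENNReal.ofReal α * Reta η xdag := by
            refine add_le_add_left (ENNReal.ofReal_le_ofReal ?_) _
            rw [hsol]
            nlinarith [norm_nonneg (y - yδ)]
    have hRHSfin : ENNReal.ofReal ((1 / 2) * δ ^ 2) + ENNReal.ofReal α * Reta η xdag ≠ ⊤ := by
      exact ENNReal.add_ne_top.mpr ⟨ENNReal.ofReal_ne_top,
        ENNReal.mul_ne_top ENNReal.ofReal_ne_top hRfin⟩
    have := (ENNReal.ofReal_le_iff_le_toReal hRHSfin).mp hkey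
    rw [ENNReal.toReal_add ENNReal.ofReal_ne_top
        (ENNReal.mul_ne_top ENNReal.ofReal_ne_top hRfin),
      ENNReal.toReal_mul, ENNReal.toReal_ofReal (by positivity),
      ENNReal.toReal_ofReal hα.le, hRval] at this
    nlinarith [this]
  refine ⟨part1, ?_⟩
  -- Part 2
  have hτ2 : 1 < τ₁ ^ 2 := by nlinarith
  have hE : 0 < (τ₁ ^ 2 - 1) * δ ^ 2 := mul_pos (by linarith) (pow_pos hδ 2)
  have hD : 0 < 2 * (C + 1) := by linarith
  refine ⟨(τ₁ ^ 2 - 1) * δ ^ 2 / (2 * (C + 1)), div_pos hE hD, ?_⟩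
  intro x hmin
  have h1 := part1 _ (div_pos hE hD) x hmin
  have hlt : ‖A x - yδ‖ ^ 2 < τ₁ ^ 2 * δ ^ 2 := by
    have hkey : 2 * ((τ₁ ^ 2 - 1) * δ ^ 2 / (2 * (C + 1))) * C < (τ₁ ^ 2 - 1) * δ ^ 2 := by
      have heq : 2 * ((τ₁ ^ 2 - 1) * δ ^ 2 / (2 * (C + 1))) * C
          = (τ₁ ^ 2 - 1) * δ ^ 2 * ((2 * C) / (2 * (C + 1))) := by ring
      rw [heq]
      have hfrac : (2 * C) / (2 * (C + 1)) < 1 := (div_lt_one hD).mpr (by linarith)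
      nlinarith
    linarith
  nlinarith [norm_nonneg (A x - yδ), mul_pos (lt_trans one_pos hτ₁) hδ]
end
end

section
/- Let Y be a real normed space, A : ℓ² → Y bounded linear, y^δ ∈ Y, η ∈ [0,1), and define J_α(x) = ½‖Ax − y^δ‖_Y² + α(‖x‖₁ − η‖x‖₂). Suppose δ > 0, τ₂ ≥ 1 and ‖y^δ‖_Y > τ₂ δ. If αₙ → ∞ and for each n, xₙ is a minimizer of J_{αₙ} over ℓ², then ‖xₙ‖₂ → 0 and ‖Axₙ − y^δ‖_Y → ‖y^δ‖_Y. Consequently, assuming for every α > 0 the set of minimizers of J_α is nonempty, there exists α₂ > 0 such that every minimizer x of J_{α₂} satisfies ‖Ax − y^δ‖_Y > τ₂ δ. -/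
open scoped ENNReal NNReal
open Filter

noncomputable section

lemma l1norm_zero : l1norm (0 : L2) = 0 := by
  simp [l1norm]

lemma Reta_zero (η : ℝ) : Reta η (0 : L2) = 0 := by
  simp [Reta, l1norm_zero]

private lemma rpow_two_eq (a : ℝ) : a ^ (2:ℝ) = a * a := by
  rw [show (2:ℝ) = ((2:ℕ):ℝ) by norm_num, Real.rpow_natCast]; ring

/-- The `ℓ²` norm is bounded by the `ℓ¹` norm. -/
lemma ofReal_norm_le_l1norm (x : L2) : ENNReal.ofReal ‖x‖ ≤ l1norm x := by
  by_cases h : l1norm x = ⊤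
  · simp [h]
  have hsum' : Summable fun i => ‖x i‖₊ :=
    ENNReal.tsum_coe_ne_top_iff_summable.mp h
  have hsum : Summable fun i => ‖x i‖ := by
    simpa [← coe_nnnorm] using NNReal.summable_coe.mpr hsum'
  set S : ℝ := ∑' i, ‖x i‖ with hSdef
  have hS : l1norm x = ENNReal.ofReal S := by
    rw [hSdef, ENNReal.ofReal_tsum_of_nonneg (fun i => norm_nonneg _) hsum]
    exact tsum_congr fun i => (ofReal_norm _).symm
  rw [hS]
  refine ENNReal.ofReal_le_ofReal ?_
  -- show ‖x‖ ≤ S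
  have hp : (0:ℝ) < (2 : ℝ≥0∞).toReal := by norm_num
  have hnorm : ‖x‖ ^ ((2:ℝ≥0∞).toReal) = ∑' i, ‖x i‖ ^ ((2:ℝ≥0∞).toReal) :=
    lp.norm_rpow_eq_tsum hp x
  have ht : (2:ℝ≥0∞).toReal = (2:ℝ) := by norm_num
  rw [ht] at hnorm
  have hSnonneg : 0 ≤ S := tsum_nonneg fun i => norm_nonneg _
  have hterm : ∀ i, ‖x i‖ ^ (2:ℝ) ≤ ‖x i‖ * S := by
    intro i
    have h1 : ‖x i‖ ≤ S := Summable.le_tsum hsum i fun j _ => norm_nonneg _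
    rw [rpow_two_eq]
    exact mul_le_mul_of_nonneg_left h1 (norm_nonneg _)
  have hsum2 : Summable fun i => ‖x i‖ ^ (2:ℝ) := by
    have := (lp.memℓp x).summable hp
    rwa [ht] at this
  have hle : ∑' i, ‖x i‖ ^ (2:ℝ) ≤ ∑' i, ‖x i‖ * S :=
    Summable.tsum_le_tsum hterm hsum2 (hsum.mul_right S)
  have hSS : ∑' i, ‖x i‖ * S = S * S := by
    rw [tsum_mul_right]
  have hfinal : ‖x‖ * ‖x‖ ≤ S * S := by
    rw [← rpow_two_eq, hnorm]; exact hle.trans_eq hSS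
  calc ‖x‖ = Real.sqrt (‖x‖ * ‖x‖) := (Real.sqrt_mul_self (norm_nonneg x)).symm
    _ ≤ Real.sqrt (S * S) := Real.sqrt_le_sqrt hfinal
    _ = S := Real.sqrt_mul_self hSnonneg

lemma Reta_ge (η : ℝ) (hη : η ∈ Set.Ico (0:ℝ) 1) (x : L2) :
    ENNReal.ofReal ((1 - η) * ‖x‖) ≤ Reta η x := by
  have h1 : ENNReal.ofReal ‖x‖ - ENNReal.ofReal (η * ‖x‖) ≤ Reta η x :=
    tsub_le_tsub_right (ofReal_norm_le_l1norm x) _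
  have h2 : ENNReal.ofReal ((1 - η) * ‖x‖) =
      ENNReal.ofReal ‖x‖ - ENNReal.ofReal (η * ‖x‖) := by
    rw [← ENNReal.ofReal_sub _ (mul_nonneg hη.1 (norm_nonneg _))]
    ring_nf
  rw [h2]; exact h1

/-- suppose `‖y^δ‖ > τ₂δ`. If `αₙ → ∞` and `xₙ` minimizes
`J_{αₙ}(x) = ½‖Ax − y^δ‖² + αₙ(‖x‖₁ − η‖x‖₂)`, then `‖xₙ‖₂ → 0` and
`‖Axₙ − y^δ‖ → ‖y^δ‖`; consequently (assuming minimizers exist for every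
`α > 0`) there exists `α₂ > 0` such that every minimizer `x` of `J_{α₂}`
satisfies `‖Ax − y^δ‖ > τ₂δ`. -/
theorem stmt17 {Y : Type*} [NormedAddCommGroup Y] [NormedSpace ℝ Y]
    (A : L2 →L[ℝ] Y) (yδ : Y) (δ τ₂ η : ℝ) (hδ : 0 < δ) (hτ₂ : 1 ≤ τ₂)
    (hη : η ∈ Set.Ico (0 : ℝ) 1) (hy : τ₂ * δ < ‖yδ‖) :
    letI J : ℝ → L2 → ℝ≥0∞ := fun α x =>
      ENNReal.ofReal ((1 / 2) * ‖A x - yδ‖ ^ 2) + ENNReal.ofReal α * Reta η x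
    (∀ (α : ℕ → ℝ) (x : ℕ → L2), Tendsto α atTop atTop →
      (∀ n, 0 < α n) → (∀ n, ∀ z : L2, J (α n) (x n) ≤ J (α n) z) →
      Tendsto (fun n => ‖x n‖) atTop (nhds 0) ∧
      Tendsto (fun n => ‖A (x n) - yδ‖) atTop (nhds ‖yδ‖)) ∧
    ((∀ α : ℝ, 0 < α → ∃ x : L2, ∀ z : L2, J α x ≤ J α z) →
      ∃ α₂ : ℝ, 0 < α₂ ∧ ∀ x : L2, (∀ z : L2, J α₂ x ≤ J α₂ z) →
        τ₂ * δ < ‖A x - yδ‖) := by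
  set J : ℝ → L2 → ℝ≥0∞ := fun α x =>
      ENNReal.ofReal ((1 / 2) * ‖A x - yδ‖ ^ 2) + ENNReal.ofReal α * Reta η x with hJ
  set C : ℝ := (1 / 2) * ‖yδ‖ ^ 2 with hC
  have hCnonneg : 0 ≤ C := by positivity
  have hηlt : η < 1 := hη.2
  -- main bound: any minimizer x of J α with α > 0 satisfies ‖x‖ ≤ C / (α * (1 - η))
  have key : ∀ (α : ℝ), 0 < α → ∀ x : L2, (∀ z : L2, J α x ≤ J α z) →
      ‖x‖ ≤ C / (α * (1 - η)) := by
    intro α hα x hmin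
    have h0 : J α 0 = ENNReal.ofReal C := by
      simp [J, Reta_zero, hC]
    have h1 : ENNReal.ofReal α * Reta η x ≤ ENNReal.ofReal C := by
      calc ENNReal.ofReal α * Reta η x ≤ J α x := le_add_self
        _ ≤ J α 0 := hmin 0
        _ = ENNReal.ofReal C := h0
    have h2 : ENNReal.ofReal (α * ((1 - η) * ‖x‖)) ≤ ENNReal.ofReal C := by
      rw [ENNReal.ofReal_mul hα.le]
      exact le_trans (mul_le_mul_right (Reta_ge η hη x) _) h1
    have h3 : α * ((1 - η) * ‖x‖) ≤ C :=
      (ENNReal.ofReal_le_ofReal_iff hCnonneg).mp h2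
    rw [le_div_iff₀ (mul_pos hα (by linarith))]
    nlinarith
  have part1 : ∀ (α : ℕ → ℝ) (x : ℕ → L2), Tendsto α atTop atTop →
      (∀ n, 0 < α n) → (∀ n, ∀ z : L2, J (α n) (x n) ≤ J (α n) z) →
      Tendsto (fun n => ‖x n‖) atTop (nhds 0) ∧
      Tendsto (fun n => ‖A (x n) - yδ‖) atTop (nhds ‖yδ‖) := by
    intro α x hαtop hαpos hmin
    have hbound : ∀ n, ‖x n‖ ≤ (C / (1 - η)) / α n := by
      intro n
      have := key (α n) (hαpos n) (x n) (hmin n)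
      rw [div_div, mul_comm (1 - η) (α n)]
      exact this
    have hlim : Tendsto (fun n => (C / (1 - η)) / α n) atTop (nhds 0) :=
      Tendsto.div_atTop tendsto_const_nhds hαtop
    have hx0 : Tendsto (fun n => ‖x n‖) atTop (nhds 0) :=
      squeeze_zero (fun n => norm_nonneg _) hbound hlim
    refine ⟨hx0, ?_⟩
    have hxx : Tendsto x atTop (nhds 0) := by
      rwa [tendsto_zero_iff_norm_tendsto_zero]
    have hA : Tendsto (fun n => A (x n)) atTop (nhds (A 0)) :=
      (A.continuous.tendsto 0).comp hxx
    rw [map_zero] at hA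
    have : Tendsto (fun n => A (x n) - yδ) atTop (nhds (0 - yδ)) :=
      hA.sub tendsto_const_nhds
    rw [zero_sub] at this
    simpa using this.norm
  refine ⟨part1, ?_⟩
  intro _hexist
  by_contra hcon
  push_neg at hcon
  set α : ℕ → ℝ := fun n => (n : ℝ) + 1 with hαdef
  have hαpos : ∀ n, 0 < α n := fun n => by positivity
  have hαtop : Tendsto α atTop atTop :=
    tendsto_atTop_add_const_right _ 1 tendsto_natCast_atTop_atTop
  choose x hxmin hxle using fun n => hcon (α n) (hαpos n)
  obtain ⟨-, h2⟩ := part1 α x hαtop hαpos hxmin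
  have hlimle : ‖yδ‖ ≤ τ₂ * δ :=
    le_of_tendsto h2 (Eventually.of_forall hxle)
  linarith
end
end

section
/- Let Y be a real normed space, A : ℓ² → Y bounded linear, δ > 0, 1 < τ₁ ≤ τ₂, η ∈ [0,1), y, y^δ ∈ Y with ‖y − y^δ‖_Y ≤ δ and ‖y^δ‖_Y > τ₂ δ, and assume there exists x† ∈ ℓ² with ‖x†‖₁ < ∞ and Ax† = y. Define J_α(x) = ½‖Ax − y^δ‖_Y² + α(‖x‖₁ − η‖x‖₂), and for each α > 0 let L_α denote its (assumed nonempty) set of minimizers over ℓ². Assume there is no α > 0 admitting minimizers x', x'' ∈ L_α with ‖Ax' − y^δ‖_Y < τ₁δ and τ₂δ < ‖Ax'' − y^δ‖_Y simultaneously. Then there exist α = α(δ, y^δ) > 0 and x_α ∈ L_α such that τ₁δ ≤ ‖Ax_α − y^δ‖_Y ≤ τ₂δ (Morozov's discrepancy principle is satisfiable). -/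
open scoped ENNReal NNReal
open Filter

noncomputable section

open Topology

set_option maxHeartbeats 1000000

/-- real `ℓ¹` norm -/
def S1 (x : L2) : ℝ := ∑' i, |x i|

lemma l1_summable {x : L2} (h : l1norm x ≠ ⊤) : Summable fun i => |x i| := by
  have := ENNReal.tsum_coe_ne_top_iff_summable.mp h
  have h2 : Summable fun i => ((‖x i‖₊ : ℝ≥0) : ℝ) := NNReal.summable_coe.mpr this
  simpa [Real.norm_eq_abs] using h2

lemma l1norm_eq {x : L2} (h : Summable fun i => |x i|) :
    l1norm x = ENNReal.ofReal (S1 x) := by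
  rw [l1norm, S1, ENNReal.ofReal_tsum_of_nonneg (fun i => abs_nonneg _) h]
  congr 1 with i
  rw [← Real.norm_eq_abs, ofReal_norm]; rfl

lemma l1norm_top {x : L2} (h : ¬ Summable fun i => |x i|) : l1norm x = ⊤ := by
  by_contra hne
  exact h (l1_summable hne)

lemma S1_nonneg (x : L2) : 0 ≤ S1 x := tsum_nonneg (fun i => abs_nonneg _)

lemma abs_le_S1 {x : L2} (h : Summable fun i => |x i|) (i : ℕ) : |x i| ≤ S1 x :=
  Summable.le_tsum h i (fun _ _ => abs_nonneg _)

lemma hasSum_sq (x : L2) : HasSum (fun i => ‖x i‖ ^ (2:ℕ)) (‖x‖ ^ (2:ℕ)) := by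
  have h2 : 0 < (2 : ℝ≥0∞).toReal := by norm_num
  have hs := lp.hasSum_norm h2 x
  have ht : (2:ℝ≥0∞).toReal = ((2:ℕ):ℝ) := by norm_num
  rw [ht] at hs
  simpa only [Real.rpow_natCast] using hs

/-- `‖x‖₂ ≤ ‖x‖₁`. -/
lemma norm_le_S1 {x : L2} (h : Summable fun i => |x i|) : ‖x‖ ≤ S1 x := by
  have hs := hasSum_sq x
  have hx2 : ‖x‖ ^ (2:ℕ) ≤ (S1 x) ^ (2:ℕ) := by
    rw [← hs.tsum_eq]
    apply Summable.tsum_le_of_sum_le hs.summable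
    intro F
    calc ∑ i ∈ F, ‖x i‖ ^ (2:ℕ) ≤ (∑ i ∈ F, ‖x i‖) ^ (2:ℕ) :=
          Finset.sum_sq_le_sq_sum_of_nonneg (fun i _ => norm_nonneg _)
      _ ≤ (S1 x) ^ (2:ℕ) := by
          apply pow_le_pow_left₀ (Finset.sum_nonneg fun i _ => norm_nonneg _)
          simp only [Real.norm_eq_abs]
          exact Summable.sum_le_tsum F (fun i _ => abs_nonneg _) h
  exact le_of_pow_le_pow_left₀ (by norm_num) (S1_nonneg x) hx2

section eta
variable {η : ℝ} (hη0 : 0 ≤ η) (hη1 : η < 1)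

/-- real penalty -/
def Rr (η : ℝ) (x : L2) : ℝ := S1 x - η * ‖x‖

include hη1 in
lemma Rr_nonneg {x : L2} (h : Summable fun i => |x i|) : 0 ≤ Rr η x := by
  have h1 : ‖x‖ ≤ S1 x := norm_le_S1 h
  have : η * ‖x‖ ≤ 1 * S1 x := by
    apply mul_le_mul hη1.le h1 (norm_nonneg _)
    norm_num
  simp only [Rr]; linarith

include hη0 in
lemma Reta_eq {x : L2} (h : Summable fun i => |x i|) :
    Reta η x = ENNReal.ofReal (Rr η x) := by
  rw [Reta, l1norm_eq h, Rr, ENNReal.ofReal_sub _ (mul_nonneg hη0 (norm_nonneg _))]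

lemma Reta_top {x : L2} (h : ¬ Summable fun i => |x i|) : Reta η x = ⊤ := by
  rw [Reta, l1norm_top h]
  exact ENNReal.top_sub ENNReal.ofReal_ne_top

include hη0 in
lemma Reta_ne_top_iff {x : L2} : Reta η x ≠ ⊤ ↔ Summable fun i => |x i| := by
  constructor
  · intro h; by_contra hs; exact h (Reta_top hs)
  · intro h; rw [Reta_eq hη0 h]; exact ENNReal.ofReal_ne_top

omit hη1 in
include hη0 in
lemma ge_Rr {x : L2} (h : Summable fun i => |x i|) : (1 - η) * S1 x ≤ Rr η x := by
  have h1 : ‖x‖ ≤ S1 x := norm_le_S1 h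
  have : η * ‖x‖ ≤ η * S1 x := mul_le_mul_of_nonneg_left h1 hη0
  simp only [Rr]; nlinarith [S1_nonneg x]

end eta

/-- membership in ℓ² from summable ℓ¹ data -/
lemma memℓ2_of_summable {f : ℕ → ℝ} (h : Summable fun i => |f i|) :
    Memℓp f 2 := by
  apply memℓp_gen
  have ht : (2:ℝ≥0∞).toReal = ((2:ℕ):ℝ) := by norm_num
  rw [ht]
  simp only [Real.rpow_natCast]
  have hb : ∀ i, ‖f i‖ ^ (2:ℕ) ≤ (∑' j, |f j|) * |f i| := by
    intro i
    have := Summable.le_tsum h i (fun _ _ => abs_nonneg _)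
    simp only [Real.norm_eq_abs, sq]
    exact mul_le_mul_of_nonneg_right this (abs_nonneg _)
  exact Summable.of_nonneg_of_le (fun i => by positivity) hb (h.mul_left _)

/-- diagonal extraction of coordinatewise convergent subsequence -/
lemma exists_subseq_pointwise (u : ℕ → L2) (C : ℝ) (hC : ∀ n i, |u n i| ≤ C) :
    ∃ φ : ℕ → ℕ, StrictMono φ ∧ ∃ f : ℕ → ℝ,
      ∀ i, Tendsto (fun n => u (φ n) i) atTop (𝓝 (f i)) := by
  have hK : IsCompact (Set.univ.pi (fun _ : ℕ => Set.Icc (-C) C)) :=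
    isCompact_univ_pi (fun _ => isCompact_Icc)
  have hmem : ∀ n, (fun i => (u n i : ℝ)) ∈ Set.univ.pi (fun _ : ℕ => Set.Icc (-C) C) := by
    intro n
    rw [Set.mem_univ_pi]
    intro i
    exact abs_le.mp (hC n i)
  obtain ⟨f, _, φ, hφ, hconv⟩ := hK.isSeqCompact hmem
  exact ⟨φ, hφ, f, fun i => (tendsto_pi_nhds.mp hconv) i⟩

/-- Fatou: the pointwise limit has summable abs with tsum ≤ L -/
lemma fatou_S1 {u : ℕ → L2} {f : ℕ → ℝ} {L : ℝ}
    (hpt : ∀ i, Tendsto (fun n => u n i) atTop (𝓝 (f i)))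
    (hlim : Tendsto (fun n => S1 (u n)) atTop (𝓝 L))
    (hsum : ∀ n, Summable fun i => |u n i|) :
    (Summable fun i => |f i|) ∧ (∑' i, |f i|) ≤ L := by
  have key : ∀ F : Finset ℕ, ∑ i ∈ F, |f i| ≤ L := by
    intro F
    have h1 : Tendsto (fun n => ∑ i ∈ F, |u n i|) atTop (𝓝 (∑ i ∈ F, |f i|)) := by
      apply tendsto_finset_sum
      intro i _
      exact (hpt i).abs
    apply le_of_tendsto_of_tendsto' h1 hlim
    intro n
    exact Summable.sum_le_tsum F (fun i _ => abs_nonneg _) (hsum n)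
  have hs : Summable fun i => |f i| := summable_of_sum_le (fun i => abs_nonneg _) key
  exact ⟨hs, Summable.tsum_le_of_sum_le hs key⟩

/-- coordinates of an `lp 2` element tend to zero -/
lemma coords_tendsto_zero (g : L2) : Tendsto (fun i => |g i|) atTop (𝓝 0) := by
  have h2 : 0 < (2 : ℝ≥0∞).toReal := by norm_num
  have hs : Summable (fun i => ‖g i‖ ^ (2:ℝ≥0∞).toReal) := (lp.hasSum_norm h2 g).summable
  have h0 : Tendsto (fun i => ‖g i‖ ^ (2:ℝ≥0∞).toReal) atTop (𝓝 0) := hs.tendsto_atTop_zero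
  have ht : (2:ℝ≥0∞).toReal = (2:ℝ) := by norm_num
  rw [ht] at h0
  have := (Real.continuous_sqrt.tendsto 0).comp h0
  simp only [Function.comp_def, Real.sqrt_zero] at this
  convert this using 2 with i
  rw [show (2:ℝ) = ((2:ℕ):ℝ) by norm_num, Real.rpow_natCast, Real.sqrt_sq (norm_nonneg _),
    Real.norm_eq_abs]

/-- weak convergence against a fixed `g ∈ ℓ²` -/
lemma tendsto_inner_of_pointwise (g : L2) {u : ℕ → L2} {x : L2} {C : ℝ}
    (hpt : ∀ i, Tendsto (fun n => u n i) atTop (𝓝 (x i)))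
    (hsum : ∀ n, Summable fun i => |u n i|) (hS : ∀ n, S1 (u n) ≤ C)
    (hsx : Summable fun i => |x i|) (hSx : S1 x ≤ C) :
    Tendsto (fun n => (inner ℝ g (u n) : ℝ)) atTop (𝓝 (inner ℝ g x)) := by
  have hg : ∀ i, |g i| ≤ ‖g‖ := by
    intro i
    have := lp.norm_apply_le_norm (by norm_num : (2:ℝ≥0∞) ≠ 0) g i
    simpa [Real.norm_eq_abs] using this
  -- key: v n := u n - x in lp, with coords u n i - x i
  set v : ℕ → L2 := fun n => u n - x with hv
  have hvc : ∀ n i, (v n : ℕ → ℝ) i = u n i - x i := by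
    intro n i
    simp [hv, lp.coeFn_sub, Pi.sub_apply]
  have hvsum : ∀ n, Summable fun i => |(v n : ℕ → ℝ) i| := by
    intro n
    simp only [hvc]
    apply Summable.of_nonneg_of_le (fun i => abs_nonneg _) (fun i => abs_sub _ _)
    exact (hsum n).add hsx
  have hvS : ∀ n, (∑' i, |(v n : ℕ → ℝ) i|) ≤ 2 * C := by
    intro n
    calc (∑' i, |(v n : ℕ → ℝ) i|) ≤ ∑' i, (|u n i| + |x i|) := by
          apply Summable.tsum_le_tsum _ (hvsum n) ((hsum n).add hsx)
          intro i
          rw [hvc]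
          exact abs_sub _ _
      _ = S1 (u n) + S1 x := Summable.tsum_add (hsum n) hsx
      _ ≤ 2 * C := by have := hS n; linarith
  -- inner products written as tsums
  have hinner : ∀ n, (inner ℝ g (u n) : ℝ) - inner ℝ g x = ∑' i, g i * (v n : ℕ → ℝ) i := by
    intro n
    rw [← inner_sub_right, lp.inner_eq_tsum]
    simp only [RCLike.inner_apply, starRingEnd_apply, star_trivial, hv, mul_comm]
  have hsummable : ∀ n, Summable fun i => g i * (v n : ℕ → ℝ) i := by
    intro n
    apply Summable.of_norm
    apply Summable.of_nonneg_of_le (fun i => norm_nonneg _) _ ((hvsum n).mul_left ‖g‖)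
    intro i
    rw [Real.norm_eq_abs, abs_mul]
    exact mul_le_mul_of_nonneg_right (hg i) (abs_nonneg _)
  rw [Metric.tendsto_atTop]
  intro ε hε
  -- choose tail cutoff K
  have hC0 : (0:ℝ) ≤ 2 * C := le_trans (tsum_nonneg fun i => abs_nonneg _) (hvS 0)
  obtain ⟨K, hK⟩ : ∃ K, ∀ i, K ≤ i → |g i| ≤ ε / (2 * (2 * C + 1)) := by
    have := (coords_tendsto_zero g).eventually_le_const
      (show (0:ℝ) < ε / (2 * (2 * C + 1)) by positivity)
    rw [eventually_atTop] at this
    obtain ⟨K, hK⟩ := this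
    exact ⟨K, fun i hi => hK i hi⟩
  -- tail estimate, uniform in n
  have htail : ∀ n, |∑' i, g (i + K) * (v n : ℕ → ℝ) (i + K)| ≤ ε / 2 := by
    intro n
    have hsn : Summable fun i => g (i + K) * (v n : ℕ → ℝ) (i + K) :=
      (summable_nat_add_iff K).mpr (hsummable n)
    have habs : Summable fun i => |g (i + K)| * |(v n : ℕ → ℝ) (i + K)| := by
      have := ((summable_nat_add_iff K).mpr (hsummable n)).abs
      simpa [abs_mul] using this
    calc |∑' i, g (i + K) * (v n : ℕ → ℝ) (i + K)|
        ≤ ∑' i, |g (i + K)| * |(v n : ℕ → ℝ) (i + K)| := by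
          simpa [Real.norm_eq_abs, abs_mul] using
            norm_tsum_le_tsum_norm (f := fun i => g (i + K) * (v n : ℕ → ℝ) (i + K))
              (by simpa [Real.norm_eq_abs, abs_mul] using habs)
      _ ≤ ∑' i, (ε / (2 * (2 * C + 1))) * |(v n : ℕ → ℝ) (i + K)| := by
          apply Summable.tsum_le_tsum _ habs _
          · intro i
            exact mul_le_mul_of_nonneg_right (hK _ (Nat.le_add_left K i)) (abs_nonneg _)
          · exact (((summable_nat_add_iff K).mpr (hvsum n)).mul_left _)
      _ = (ε / (2 * (2 * C + 1))) * ∑' i, |(v n : ℕ → ℝ) (i + K)| := by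
          rw [tsum_mul_left]
      _ ≤ (ε / (2 * (2 * C + 1))) * (2 * C) := by
          apply mul_le_mul_of_nonneg_left _ (by positivity)
          have hsplit := Summable.sum_add_tsum_nat_add (f := fun i => |(v n : ℕ → ℝ) i|) K (hvsum n)
          have hhead : 0 ≤ ∑ i ∈ Finset.range K, |(v n : ℕ → ℝ) i| :=
            Finset.sum_nonneg fun i _ => abs_nonneg _
          have := hvS n
          linarith [hsplit]
      _ ≤ ε / 2 := by
          rw [div_mul_eq_mul_div, div_le_div_iff₀ (by positivity) (by norm_num)]
          nlinarith
  -- head tends to 0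
  have hhead : Tendsto (fun n => ∑ i ∈ Finset.range K, g i * (v n : ℕ → ℝ) i) atTop (𝓝 0) := by
    have : ∀ i, Tendsto (fun n => g i * (v n : ℕ → ℝ) i) atTop (𝓝 0) := by
      intro i
      have h1 : Tendsto (fun n => (v n : ℕ → ℝ) i) atTop (𝓝 0) := by
        simp only [hvc]
        have := (hpt i).sub_const (x i)
        simpa using this
      simpa using h1.const_mul (g i)
    have := tendsto_finset_sum (Finset.range K) (fun i _ => this i)
    simpa using this
  rw [Metric.tendsto_atTop] at hhead
  obtain ⟨N, hN⟩ := hhead (ε / 4) (by positivity)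
  refine ⟨N, fun n hn => ?_⟩
  rw [Real.dist_eq, hinner n]
  rw [← Summable.sum_add_tsum_nat_add (f := fun i => g i * (v n : ℕ → ℝ) i) K (hsummable n)]
  have h1 := hN n hn
  rw [Real.dist_eq, sub_zero] at h1
  calc |∑ i ∈ Finset.range K, g i * (v n : ℕ → ℝ) i + ∑' i, g (i + K) * (v n : ℕ → ℝ) (i + K)|
      ≤ |∑ i ∈ Finset.range K, g i * (v n : ℕ → ℝ) i| +
        |∑' i, g (i + K) * (v n : ℕ → ℝ) (i + K)| := abs_add_le _ _
    _ < ε := by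
        have := htail n
        linarith

lemma norm_bound_aux {w x : L2} {K : ℕ} {Lb e : ℝ}
    (hw : Summable fun i => |w i|) (hx : Summable fun i => |x i|)
    (hxt : (∑' i, |x (i + K)|) ≤ e)
    (hhead : ∑ i ∈ Finset.range K, |w i - x i| ≤ e)
    (hS : S1 w ≤ Lb + e)
    (hwhead : (∑ i ∈ Finset.range K, |x i|) - e ≤ ∑ i ∈ Finset.range K, |w i|) :
    ‖w‖ ≤ ‖x‖ + (Lb - S1 x) + 5 * e := by
  have hxtail : Summable fun i => |x (i + K)| := (summable_nat_add_iff (f := fun i => |x i|) K).mpr hx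
  have hwtail : Summable fun i => |w (i + K)| := (summable_nat_add_iff (f := fun i => |w i|) K).mpr hw
  set v : L2 := w - x with hv
  have hvc : ∀ i, (v : ℕ → ℝ) i = w i - x i := by
    intro i; simp [hv, lp.coeFn_sub, Pi.sub_apply]
  clear_value v
  have hvsum : Summable fun i => |(v : ℕ → ℝ) i| := by
    apply Summable.of_nonneg_of_le (fun i => abs_nonneg _) _ (hw.add hx)
    intro i
    rw [hvc]
    exact abs_sub _ _
  have hvtailsum : Summable fun i => |(v : ℕ → ℝ) (i + K)| :=
    (summable_nat_add_iff (f := fun i => |(v : ℕ → ℝ) i|) K).mpr hvsum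
  have hadd : (∑' i, (|w (i + K)| + |x (i + K)|))
      = (∑' i, |w (i + K)|) + ∑' i, |x (i + K)| := Summable.tsum_add hwtail hxtail
  have hvtail : (∑' i, |(v : ℕ → ℝ) (i + K)|) ≤
      (∑' i, |w (i + K)|) + ∑' i, |x (i + K)| := by
    rw [← hadd]
    apply Summable.tsum_le_tsum _ hvtailsum (hwtail.add hxtail)
    intro i
    rw [hvc]
    exact abs_sub _ _
  have hnv : ‖v‖ ≤ ∑' i, |(v : ℕ → ℝ) i| := norm_le_S1 hvsum
  have hsplit_v := Summable.sum_add_tsum_nat_add (f := fun i => |(v : ℕ → ℝ) i|) K hvsum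
  have hsplit_w := Summable.sum_add_tsum_nat_add (f := fun i => |w i|) K hw
  have hsplit_x := Summable.sum_add_tsum_nat_add (f := fun i => |x i|) K hx
  have hS1w : S1 w = ∑' i, |w i| := rfl
  have hS1x : S1 x = ∑' i, |x i| := rfl
  have headv : ∑ i ∈ Finset.range K, |(v : ℕ → ℝ) i| ≤ e := by
    calc ∑ i ∈ Finset.range K, |(v : ℕ → ℝ) i|
        = ∑ i ∈ Finset.range K, |w i - x i| := by
          apply Finset.sum_congr rfl; intro i _; rw [hvc]
      _ ≤ e := hhead
  have hwx : ‖w‖ ≤ ‖x‖ + ‖v‖ := by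
    have h7 : w = x + v := by rw [hv]; abel
    rw [h7]
    exact norm_add_le _ _
  -- assemble
  linarith [hvtail, hnv, hsplit_v, hsplit_w, hsplit_x, headv, hwx, hS, hwhead, hxt,
    hS1w ▸ hS, hS1x ▸ le_refl (S1 x)]

lemma key_eta {u : ℕ → L2} {x : L2} {L N : ℝ}
    (hpt : ∀ i, Tendsto (fun n => u n i) atTop (𝓝 (x i)))
    (hsum : ∀ n, Summable fun i => |u n i|)
    (hsx : Summable fun i => |x i|)
    (hL : Tendsto (fun n => S1 (u n)) atTop (𝓝 L))
    (hN : Tendsto (fun n => ‖u n‖) atTop (𝓝 N)) :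
    N - ‖x‖ ≤ L - S1 x := by
  have main : ∀ ε > (0:ℝ), N ≤ ‖x‖ + (L - S1 x) + ε := by
    intro ε hε
    have he8 : (0:ℝ) < ε / 8 := by positivity
    obtain ⟨K, hK⟩ : ∃ K : ℕ, (∑' i, |x (i + K)|) ≤ ε / 8 := by
      have := (tendsto_sum_nat_add fun i => |x i|).eventually_le_const he8
      rw [eventually_atTop] at this
      obtain ⟨K, hK⟩ := this
      exact ⟨K, hK K le_rfl⟩
    have ev1 : ∀ᶠ n in atTop, ∑ i ∈ Finset.range K, |u n i - x i| ≤ ε / 8 := by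
      have h1 : Tendsto (fun n => ∑ i ∈ Finset.range K, |u n i - x i|) atTop (𝓝 0) := by
        have hterm : ∀ i, Tendsto (fun n => |u n i - x i|) atTop (𝓝 0) := by
          intro i
          have := ((hpt i).sub_const (x i)).abs
          simpa using this
        have := tendsto_finset_sum (Finset.range K) (fun i _ => hterm i)
        simpa using this
      exact h1.eventually_le_const he8
    have ev2 : ∀ᶠ n in atTop, S1 (u n) ≤ L + ε / 8 :=
      hL.eventually_le_const (by linarith)
    have ev3 : ∀ᶠ n in atTop,
        (∑ i ∈ Finset.range K, |x i|) - ε / 8 ≤ ∑ i ∈ Finset.range K, |u n i| := by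
      have h1 : Tendsto (fun n => ∑ i ∈ Finset.range K, |u n i|) atTop
          (𝓝 (∑ i ∈ Finset.range K, |x i|)) :=
        tendsto_finset_sum _ (fun i _ => (hpt i).abs)
      exact h1.eventually_const_le (by linarith)
    have bound : ∀ᶠ n in atTop, ‖u n‖ ≤ ‖x‖ + (L - S1 x) + ε := by
      filter_upwards [ev1, ev2, ev3] with n h1 h2 h3
      have := norm_bound_aux (hsum n) hsx hK h1 h2 h3
      linarith
    exact le_of_tendsto hN bound
  have hfin : N ≤ ‖x‖ + (L - S1 x) := by
    by_contra hcon
    push_neg at hcon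
    have h1 := main ((N - (‖x‖ + (L - S1 x)))/2) (by linarith)
    linarith
  linarith

section J

variable {Y : Type*} [NormedAddCommGroup Y] [NormedSpace ℝ Y]
variable (A : L2 →L[ℝ] Y) (yδ : Y)

def Jf (η α : ℝ) (x : L2) : ℝ≥0∞ :=
  ENNReal.ofReal ((1 / 2) * ‖A x - yδ‖ ^ 2) + ENNReal.ofReal α * Reta η x

def Jr (η α : ℝ) (x : L2) : ℝ := (1 / 2) * ‖A x - yδ‖ ^ 2 + α * Rr η x

variable {η : ℝ} (hη0 : 0 ≤ η) (hη1 : η < 1)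

include hη1 in
lemma Jr_nonneg {α : ℝ} (hα : 0 ≤ α) {x : L2} (h : Summable fun i => |x i|) :
    0 ≤ Jr A yδ η α x := by
  have h1 := Rr_nonneg hη1 h
  have h2 : 0 ≤ α * Rr η x := mul_nonneg hα h1
  have h3 : (0:ℝ) ≤ (1/2) * ‖A x - yδ‖ ^ 2 := by positivity
  simp only [Jr]; linarith

include hη0 hη1 in
lemma Jf_eq {α : ℝ} (hα : 0 ≤ α) {x : L2} (h : Summable fun i => |x i|) :
    Jf A yδ η α x = ENNReal.ofReal (Jr A yδ η α x) := by
  rw [Jf, Jr, Reta_eq hη0 h, ← ENNReal.ofReal_mul hα,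
    ENNReal.ofReal_add (by positivity) (mul_nonneg hα (Rr_nonneg hη1 h))]

lemma Jf_top {α : ℝ} (hα : 0 < α) {x : L2} (h : ¬ Summable fun i => |x i|) :
    Jf A yδ η α x = ⊤ := by
  rw [Jf, Reta_top h, ENNReal.mul_top (by simp [ENNReal.ofReal_eq_zero, not_le, hα])]
  simp

include hη0 hη1 in
lemma Jf_le_iff {α : ℝ} (hα : 0 ≤ α) {x z : L2} (hx : Summable fun i => |x i|)
    (hz : Summable fun i => |z i|) :
    Jf A yδ η α x ≤ Jf A yδ η α z ↔ Jr A yδ η α x ≤ Jr A yδ η α z := by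
  rw [Jf_eq A yδ hη0 hη1 hα hx, Jf_eq A yδ hη0 hη1 hα hz,
    ENNReal.ofReal_le_ofReal_iff (Jr_nonneg A yδ hη1 hα hz)]

include hη0 in
lemma summable_of_le {α : ℝ} (hα : 0 < α) {x z : L2} (hz : Summable fun i => |z i|)
    (h : Jf A yδ η α x ≤ Jf A yδ η α z) : Summable fun i => |x i| := by
  by_contra hs
  rw [Jf_top A yδ hα hs] at h
  have hne : Jf A yδ η α z ≠ ⊤ := by
    rw [Jf, Reta_eq hη0 hz]
    exact ENNReal.add_ne_top.mpr ⟨ENNReal.ofReal_ne_top,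
      ENNReal.mul_ne_top ENNReal.ofReal_ne_top ENNReal.ofReal_ne_top⟩
  exact hne (top_le_iff.mp h)

/-- discrepancy monotonicity -/
lemma mono_d {α α' : ℝ} (hα : 0 < α) (hlt : α < α') {x x' : L2}
    (hx : Summable fun i => |x i|) (hx' : Summable fun i => |x' i|)
    (h1 : Jr A yδ η α x ≤ Jr A yδ η α x') (h2 : Jr A yδ η α' x' ≤ Jr A yδ η α' x) :
    ‖A x - yδ‖ ≤ ‖A x' - yδ‖ := by
  simp only [Jr] at h1 h2
  set a := ‖A x - yδ‖ with ha
  set b := ‖A x' - yδ‖ with hb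
  have hb0 : 0 ≤ b := norm_nonneg _
  have ha0 : 0 ≤ a := norm_nonneg _
  have hrr : Rr η x' ≤ Rr η x := by nlinarith
  have hab : a ^ 2 ≤ b ^ 2 := by nlinarith
  exact le_of_pow_le_pow_left₀ two_ne_zero hb0 hab

lemma norm_le_of_weak (A : L2 →L[ℝ] Y) (yδ : Y) {u : ℕ → L2} {x : L2} {C D : ℝ}
    (hpt : ∀ i, Tendsto (fun n => u n i) atTop (𝓝 (x i)))
    (hsum : ∀ n, Summable fun i => |u n i|) (hS : ∀ n, S1 (u n) ≤ C)
    (hsx : Summable fun i => |x i|) (hSx : S1 x ≤ C)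
    (hd : Tendsto (fun n => ‖A (u n) - yδ‖) atTop (𝓝 D)) :
    ‖A x - yδ‖ ≤ D := by
  by_cases h0 : A x - yδ = 0
  · rw [h0, norm_zero]
    exact le_of_tendsto_of_tendsto' tendsto_const_nhds hd (fun n => norm_nonneg _)
  · obtain ⟨f, hf1, hf2⟩ := exists_dual_vector ℝ (A x - yδ) (norm_ne_zero_iff.mpr h0)
    set g : L2 := (InnerProductSpace.toDual ℝ L2).symm (f.comp A) with hg
    have hginner : ∀ z : L2, (inner ℝ g z : ℝ) = f (A z) := by
      intro z
      rw [hg, InnerProductSpace.toDual_symm_apply]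
      rfl
    have key : Tendsto (fun n => f (A (u n) - yδ)) atTop (𝓝 (f (A x - yδ))) := by
      have h1 := tendsto_inner_of_pointwise g hpt hsum hS hsx hSx
      simp only [hginner] at h1
      have h2 := h1.sub_const (f yδ)
      simpa only [map_sub] using h2
    have hval : f (A x - yδ) = ‖A x - yδ‖ := by
      simpa using hf2
    rw [← hval]
    apply le_of_tendsto_of_tendsto' key hd
    intro n
    calc f (A (u n) - yδ) ≤ |f (A (u n) - yδ)| := le_abs_self _
      _ ≤ ‖f‖ * ‖A (u n) - yδ‖ := by
          simpa [Real.norm_eq_abs] using f.le_opNorm (A (u n) - yδ)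
      _ = ‖A (u n) - yδ‖ := by rw [hf1, one_mul]

/-- Bolzano–Weierstrass helper -/
lemma bw {v : ℕ → ℝ} {c : ℝ} (h : ∀ n, v n ∈ Set.Icc (-c) c) :
    ∃ l, ∃ ψ : ℕ → ℕ, StrictMono ψ ∧ Tendsto (v ∘ ψ) atTop (𝓝 l) := by
  obtain ⟨l, _, ψ, hψ, hconv⟩ := tendsto_subseq_of_bounded (Metric.isBounded_Icc (a := -c) (b := c)) h
  exact ⟨l, ψ, hψ, hconv⟩

include hη0 hη1 in
lemma core {αs : ℝ} (hαs : 0 < αs) {a : ℕ → ℝ} (ha : ∀ n, 0 < a n)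
    (hat : Tendsto a atTop (𝓝 αs))
    {u : ℕ → L2} (hmin : ∀ n z, Jf A yδ η (a n) (u n) ≤ Jf A yδ η (a n) z)
    {C : ℝ} (hCsum : ∀ n, Summable fun i => |u n i|) (hCS : ∀ n, S1 (u n) ≤ C) :
    ∃ xb : L2, (∀ z, Jf A yδ η αs xb ≤ Jf A yδ η αs z) ∧
      ∃ φ : ℕ → ℕ, StrictMono φ ∧
        Tendsto (fun n => ‖A (u (φ n)) - yδ‖) atTop (𝓝 ‖A xb - yδ‖) := by
  have hC0 : 0 ≤ C := le_trans (S1_nonneg (u 0)) (hCS 0)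
  -- step 1: pointwise convergent subsequence
  obtain ⟨φ₁, hφ₁, f, hfconv⟩ := exists_subseq_pointwise u C
    (fun n i => le_trans (abs_le_S1 (hCsum n) i) (hCS n))
  -- step 2: convergence of S1 along a further subsequence
  have hbnd1 : ∀ n, S1 (u (φ₁ n)) ∈ Set.Icc (-C) C :=
    fun n => ⟨le_trans (by linarith) (S1_nonneg _), hCS _⟩
  obtain ⟨L, φ₂, hφ₂, hLconv⟩ := bw hbnd1
  -- step 3: convergence of norms along a further subsequence
  have hbnd2 : ∀ n, ‖u (φ₁ (φ₂ n))‖ ∈ Set.Icc (-C) C := fun n =>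
    ⟨le_trans (by linarith) (norm_nonneg _),
      le_trans (norm_le_S1 (hCsum _)) (hCS _)⟩
  obtain ⟨N, φ₃, hφ₃, hNconv⟩ := bw hbnd2
  -- step 4: convergence of discrepancies along a further subsequence
  have hbnd3 : ∀ n, ‖A (u (φ₁ (φ₂ (φ₃ n)))) - yδ‖ ∈ Set.Icc (-(‖A‖ * C + ‖yδ‖)) (‖A‖ * C + ‖yδ‖) := by
    intro n
    constructor
    · have h1 : (0:ℝ) ≤ ‖A‖ * C + ‖yδ‖ := by positivity
      linarith [norm_nonneg (A (u (φ₁ (φ₂ (φ₃ n)))) - yδ)]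
    · calc ‖A (u (φ₁ (φ₂ (φ₃ n)))) - yδ‖ ≤ ‖A (u (φ₁ (φ₂ (φ₃ n))))‖ + ‖yδ‖ := norm_sub_le _ _
        _ ≤ ‖A‖ * ‖u (φ₁ (φ₂ (φ₃ n)))‖ + ‖yδ‖ := by
            linarith [A.le_opNorm (u (φ₁ (φ₂ (φ₃ n))))]
        _ ≤ ‖A‖ * C + ‖yδ‖ := by
            have := le_trans (norm_le_S1 (hCsum (φ₁ (φ₂ (φ₃ n))))) (hCS (φ₁ (φ₂ (φ₃ n))))
            nlinarith [norm_nonneg A]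
  obtain ⟨D, φ₄, hφ₄, hDconv⟩ := bw hbnd3
  -- the final subsequence
  set φ : ℕ → ℕ := fun n => φ₁ (φ₂ (φ₃ (φ₄ n))) with hφdef
  have hφ : StrictMono φ := hφ₁.comp (hφ₂.comp (hφ₃.comp hφ₄))
  set w : ℕ → L2 := fun n => u (φ n) with hw
  have hwsum : ∀ n, Summable fun i => |w n i| := fun n => hCsum _
  have hwS : ∀ n, S1 (w n) ≤ C := fun n => hCS _
  -- transported convergences
  have hwpt : ∀ i, Tendsto (fun n => w n i) atTop (𝓝 (f i)) := by
    intro i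
    exact (hfconv i).comp ((hφ₂.comp (hφ₃.comp hφ₄)).tendsto_atTop)
  have hwL : Tendsto (fun n => S1 (w n)) atTop (𝓝 L) :=
    hLconv.comp ((hφ₃.comp hφ₄).tendsto_atTop)
  have hwN : Tendsto (fun n => ‖w n‖) atTop (𝓝 N) :=
    hNconv.comp (hφ₄.tendsto_atTop)
  have hwD : Tendsto (fun n => ‖A (w n) - yδ‖) atTop (𝓝 D) := hDconv
  have hwa : Tendsto (fun n => a (φ n)) atTop (𝓝 αs) := hat.comp (hφ.tendsto_atTop)
  -- limit element
  obtain ⟨hfsum, hfS1⟩ := fatou_S1 hwpt hwL hwsum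
  set xb : L2 := ⟨f, memℓ2_of_summable hfsum⟩ with hxb
  have hxbc : ∀ i, (xb : ℕ → ℝ) i = f i := fun i => rfl
  have hxssum : Summable fun i => |xb i| := by simpa only [hxbc] using hfsum
  have hxbS1 : S1 xb ≤ L := by
    rw [S1]; simpa only [hxbc] using hfS1
  have hLC : L ≤ C := le_of_tendsto_of_tendsto' hwL tendsto_const_nhds hwS
  have hxbpt : ∀ i, Tendsto (fun n => w n i) atTop (𝓝 (xb i)) := by
    intro i; rw [hxbc]; exact hwpt i
  -- lower semicontinuity of discrepancy
  have hdb : ‖A xb - yδ‖ ≤ D :=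
    norm_le_of_weak A yδ hxbpt hwsum hwS hxssum (le_trans hxbS1 hLC) hwD
  -- penalty bounds
  have hke : N - ‖xb‖ ≤ L - S1 xb := key_eta hxbpt hwsum hxssum hwL hwN
  have hrb : Rr η xb ≤ L - η * N := by
    rcases le_or_gt ‖xb‖ N with h | h
    · have h1 : η * (N - ‖xb‖) ≤ N - ‖xb‖ := by nlinarith
      simp only [Rr]; nlinarith
    · have h1 : η * (N - ‖xb‖) ≤ 0 := by nlinarith
      simp only [Rr]; nlinarith
  -- convergence of real J values
  have hrconv : Tendsto (fun n => Rr η (w n)) atTop (𝓝 (L - η * N)) := by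
    simp only [Rr]
    exact hwL.sub (hwN.const_mul η)
  have hDnn : 0 ≤ D := le_of_tendsto_of_tendsto' tendsto_const_nhds hwD
    (fun n => norm_nonneg _)
  have hJconv : Tendsto (fun n => Jr A yδ η (a (φ n)) (w n)) atTop
      (𝓝 ((1/2) * D^2 + αs * (L - η * N))) := by
    simp only [Jr]
    exact (((hwD.pow 2).const_mul (1/2)).add (hwa.mul hrconv))
  -- midpoint value inequality
  have mid_le : ∀ z : L2, (Summable fun i => |z i|) →
      (1/2) * D^2 + αs * (L - η * N) ≤ Jr A yδ η αs z := by
    intro z hz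
    have hper : ∀ n, Jr A yδ η (a (φ n)) (w n) ≤ Jr A yδ η (a (φ n)) z := by
      intro n
      exact (Jf_le_iff A yδ hη0 hη1 (ha (φ n)).le (hwsum n) hz).mp (hmin (φ n) z)
    have hzconv : Tendsto (fun n => Jr A yδ η (a (φ n)) z) atTop (𝓝 (Jr A yδ η αs z)) := by
      simp only [Jr]
      exact tendsto_const_nhds.add (hwa.mul_const _)
    exact le_of_tendsto_of_tendsto' hJconv hzconv hper
  have hxb_le_mid : Jr A yδ η αs xb ≤ (1/2) * D^2 + αs * (L - η * N) := by
    have hsq : ‖A xb - yδ‖^2 ≤ D^2 := by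
      have := norm_nonneg (A xb - yδ)
      nlinarith
    simp only [Jr]
    nlinarith [hrb]
  -- xb is a minimizer at αs
  have hminb : ∀ z, Jf A yδ η αs xb ≤ Jf A yδ η αs z := by
    intro z
    by_cases hz : Summable fun i => |z i|
    · rw [Jf_le_iff A yδ hη0 hη1 hαs.le hxssum hz]
      exact le_trans hxb_le_mid (mid_le z hz)
    · rw [Jf_top A yδ hαs hz]
      exact le_top
  -- discrepancy attains the limit
  have hDeq : ‖A xb - yδ‖ = D := by
    have h1 := mid_le xb hxssum
    simp only [Jr] at h1
    have h2 : Rr η xb ≤ L - η * N := hrb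
    have h3 : D^2 ≤ ‖A xb - yδ‖^2 := by nlinarith
    have h4 : D ≤ ‖A xb - yδ‖ :=
      le_of_pow_le_pow_left₀ two_ne_zero (norm_nonneg _) h3
    linarith
  exact ⟨xb, hminb, φ, hφ, by rw [hDeq]; exact hwD⟩

end J

/-- satisfiability of Morozov's discrepancy principle for
`J_α(x) = ½‖Ax − y^δ‖² + α(‖x‖₁ − η‖x‖₂)`: under the stated assumptions
there exist `α > 0` and a minimizer `x_α` of `J_α` with
`τ₁δ ≤ ‖Ax_α − y^δ‖ ≤ τ₂δ`. -/
theorem stmt18 {Y : Type*} [NormedAddCommGroup Y] [NormedSpace ℝ Y]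
    (A : L2 →L[ℝ] Y) (δ τ₁ τ₂ η : ℝ) (hδ : 0 < δ) (hτ₁ : 1 < τ₁)
    (hτ : τ₁ ≤ τ₂) (hη : η ∈ Set.Ico (0 : ℝ) 1)
    (y yδ : Y) (hnoise : ‖y - yδ‖ ≤ δ) (hy : τ₂ * δ < ‖yδ‖)
    (xdag : L2) (hfin : l1norm xdag < ⊤) (hsol : A xdag = y) :
    letI J : ℝ → L2 → ℝ≥0∞ := fun α x =>
      ENNReal.ofReal ((1 / 2) * ‖A x - yδ‖ ^ 2) + ENNReal.ofReal α * Reta η x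
    (∀ α : ℝ, 0 < α → ∃ x : L2, ∀ z : L2, J α x ≤ J α z) →
    (¬ ∃ α : ℝ, 0 < α ∧ ∃ x' x'' : L2,
      (∀ z : L2, J α x' ≤ J α z) ∧ (∀ z : L2, J α x'' ≤ J α z) ∧
      ‖A x' - yδ‖ < τ₁ * δ ∧ τ₂ * δ < ‖A x'' - yδ‖) →
    ∃ α : ℝ, 0 < α ∧ ∃ xα : L2, (∀ z : L2, J α xα ≤ J α z) ∧
      τ₁ * δ ≤ ‖A xα - yδ‖ ∧ ‖A xα - yδ‖ ≤ τ₂ * δ := by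
  intro hexist hno
  obtain ⟨hη0, hη1⟩ := hη
  -- basic facts about x†
  have hdag_sum : Summable fun i => |xdag i| := l1_summable hfin.ne
  have hdagd : ‖A xdag - yδ‖ = ‖y - yδ‖ := by rw [hsol]
  set rdag : ℝ := Rr η xdag with hrdag
  have hrdag0 : 0 ≤ rdag := Rr_nonneg hη1 hdag_sum
  have hτ₂1 : 1 < τ₂ := lt_of_lt_of_le hτ₁ hτ
  -- `P α x` : x is a minimizer of `J_α`
  set P : ℝ → L2 → Prop := fun α x => ∀ z, Jf A yδ η α x ≤ Jf A yδ η α z with hP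
  have hminsum : ∀ {α x}, 0 < α → P α x → Summable fun i => |x i| := by
    intro α x hα hx
    exact summable_of_le A yδ hη0 hα hdag_sum (hx xdag)
  -- minimizers compared with x†
  have hmin_dag : ∀ {α x}, 0 < α → P α x →
      (1/2) * ‖A x - yδ‖^2 + α * Rr η x ≤ (1/2) * δ^2 + α * rdag := by
    intro α x hα hx
    have h1 : Jr A yδ η α x ≤ Jr A yδ η α xdag :=
      (Jf_le_iff A yδ hη0 hη1 hα.le (hminsum hα hx) hdag_sum).mp (hx xdag)
    simp only [Jr] at h1
    rw [hdagd] at h1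
    have h2 : ‖y - yδ‖^2 ≤ δ^2 := by nlinarith [norm_nonneg (y - yδ)]
    nlinarith
  -- contradiction assumption
  by_contra hcon
  push_neg at hcon
  -- dichotomy for every minimizer
  have hdich : ∀ {α x}, 0 < α → P α x →
      ‖A x - yδ‖ < τ₁ * δ ∨ τ₂ * δ < ‖A x - yδ‖ := by
    intro α x hα hx
    rcases lt_or_ge ‖A x - yδ‖ (τ₁ * δ) with h | h
    · exact Or.inl h
    · exact Or.inr (hcon α hα x hx h)
  -- the set T of "large discrepancy" parameters
  set T : Set ℝ := {α | 0 < α ∧ ∃ x, P α x ∧ τ₂ * δ < ‖A x - yδ‖} with hT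
  -- step 1 : a small parameter not in T
  set α₀ : ℝ := (τ₁^2 - 1) * δ^2 / (4 * (rdag + 1)) with hα₀def
  have hα₀ : 0 < α₀ := by
    apply div_pos
    · have h1 : 0 < τ₁^2 - 1 := by nlinarith
      have h2 : 0 < δ^2 := by positivity
      nlinarith
    · nlinarith
  obtain ⟨x₀, hx₀⟩ := hexist α₀ hα₀
  have hx₀P : P α₀ x₀ := hx₀
  have hd₀ : ‖A x₀ - yδ‖ < τ₁ * δ := by
    have h1 := hmin_dag hα₀ hx₀P
    have h2 : 0 ≤ Rr η x₀ := Rr_nonneg hη1 (hminsum hα₀ hx₀P)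
    have h3 : 2 * α₀ * rdag ≤ (τ₁^2 - 1) * δ^2 / 2 := by
      have hb : (0:ℝ) < 4 * (rdag + 1) := by linarith
      have e₀ : α₀ * (4 * (rdag + 1)) = (τ₁^2 - 1) * δ^2 := by
        rw [hα₀def]; exact div_mul_cancel₀ _ (ne_of_gt hb)
      have e : 4 * (α₀ * rdag) + 4 * α₀ = (τ₁^2 - 1) * δ^2 := by linear_combination e₀
      linarith [e, hα₀.le]
    have h4 : ‖A x₀ - yδ‖^2 < (τ₁ * δ)^2 := by
      nlinarith [mul_pos (show (0:ℝ) < τ₁^2 - 1 by nlinarith)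
        (show (0:ℝ) < δ^2 by positivity), mul_nonneg hα₀.le h2]
    calc ‖A x₀ - yδ‖ = ‖A x₀ - yδ‖ := rfl
      _ < τ₁ * δ := lt_of_pow_lt_pow_left₀ 2 (by positivity) h4
  -- step 2 : a large parameter in T
  have hyδ0 : 0 < ‖yδ‖ := lt_trans (by positivity) hy
  have hm : 0 < 1 - η := by linarith
  set ε : ℝ := (‖yδ‖ - τ₂ * δ) / (‖A‖ + 1) with hεdef
  have hε : 0 < ε := div_pos (by linarith) (by positivity)
  set α₁ : ℝ := max (α₀ + 1) (‖yδ‖^2 / ((1 - η) * ε) + 1) with hα₁def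
  have hα₁q : ‖yδ‖^2 / ((1 - η) * ε) + 1 ≤ α₁ := le_max_right _ _
  have hα₁pos : 0 < α₁ := by
    have h0 : 0 ≤ ‖yδ‖^2 / ((1 - η) * ε) := div_nonneg (sq_nonneg _) (mul_pos hm hε).le
    exact lt_of_lt_of_le (by linarith) hα₁q
  have hα₀1 : α₀ < α₁ := lt_of_lt_of_le (by linarith) (le_max_left _ _)
  obtain ⟨x₁, hx₁⟩ := hexist α₁ hα₁pos
  have hx₁P : P α₁ x₁ := hx₁
  have hzero_sum : Summable fun i => |(0 : L2) i| := by
    have : ∀ i, |(0 : L2) i| = 0 := by intro i; simp [lp.coeFn_zero]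
    simp only [this]
    exact summable_zero
  have hx₁sum := hminsum hα₁pos hx₁P
  have hd₁ : τ₂ * δ < ‖A x₁ - yδ‖ := by
    have h1 : Jr A yδ η α₁ x₁ ≤ Jr A yδ η α₁ 0 :=
      (Jf_le_iff A yδ hη0 hη1 hα₁pos.le hx₁sum hzero_sum).mp (hx₁ 0)
    have hJr0 : Jr A yδ η α₁ 0 = (1/2) * ‖yδ‖^2 := by
      simp only [Jr, Rr, S1]
      have h0 : ∀ i, |(0 : L2) i| = 0 := by intro i; simp [lp.coeFn_zero]
      simp [h0, map_zero, tsum_zero]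
    rw [hJr0] at h1
    simp only [Jr] at h1
    -- bound on S1 x₁
    have h2 : (1 - η) * S1 x₁ ≤ Rr η x₁ := ge_Rr hη0 hx₁sum
    have h3 : α₁ * Rr η x₁ ≤ (1/2) * ‖yδ‖^2 := by nlinarith [sq_nonneg ‖A x₁ - yδ‖]
    have hq : 0 < ‖yδ‖^2 / ((1 - η) * ε) := div_pos (by positivity) (mul_pos hm hε)
    have hS1b : S1 x₁ ≤ ε / 2 := by
      have h5 : α₁ * ((1 - η) * S1 x₁) ≤ (1/2) * ‖yδ‖^2 := by nlinarith
      set q := ‖yδ‖^2 / ((1 - η) * ε) with hqdef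
      have hq0 : 0 < q := hq
      have h6 : ‖yδ‖^2 = q * ((1 - η) * ε) := by
        rw [hqdef]; field_simp
      have hS10 := S1_nonneg x₁
      have step1 : (q + 1) * ((1 - η) * S1 x₁) ≤ α₁ * ((1 - η) * S1 x₁) :=
        mul_le_mul_of_nonneg_right (by linarith [hα₁q]) (mul_nonneg hm.le (S1_nonneg x₁))
      have step2 : (q + 1) * ((1 - η) * S1 x₁) ≤ (1/2) * (q * ((1 - η) * ε)) := by
        calc (q + 1) * ((1 - η) * S1 x₁) ≤ α₁ * ((1 - η) * S1 x₁) := step1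
          _ ≤ (1/2) * ‖yδ‖^2 := h5
          _ = (1/2) * (q * ((1 - η) * ε)) := by rw [h6]
      have step3 : (q + 1) * S1 x₁ ≤ (1/2) * (q * ε) := by nlinarith [step2, hm]
      nlinarith [step3, hq0, hε, hS10]
    have h7 : ‖A x₁‖ ≤ ‖A‖ * (ε / 2) := by
      calc ‖A x₁‖ ≤ ‖A‖ * ‖x₁‖ := A.le_opNorm x₁
        _ ≤ ‖A‖ * (ε / 2) := by
            have := le_trans (norm_le_S1 hx₁sum) hS1b
            nlinarith [norm_nonneg A]
    have h8 : ‖yδ‖ - ‖A x₁‖ ≤ ‖A x₁ - yδ‖ := by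
      have h9 := norm_sub_norm_le yδ (A x₁)
      rw [norm_sub_rev] at h9
      exact h9
    have hεA : (‖A‖ + 1) * ε = ‖yδ‖ - τ₂ * δ := by
      rw [hεdef]; field_simp
    nlinarith [norm_nonneg A]
  have hα₁T : α₁ ∈ T := ⟨hα₁pos, x₁, hx₁P, hd₁⟩
  -- Jr inequalities between minimizers
  have hJrle : ∀ {α x z}, 0 < α → P α x → (Summable fun i => |z i|) →
      Jr A yδ η α x ≤ Jr A yδ η α z := by
    intro α x z hα hx hz
    exact (Jf_le_iff A yδ hη0 hη1 hα.le (hminsum hα hx) hz).mp (hx z)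
  -- monotonicity: any element of T is > α₀
  have hTlb : ∀ t ∈ T, α₀ < t := by
    rintro t ⟨ht0, xt, hxt, hdt⟩
    by_contra hle
    push_neg at hle
    rcases eq_or_lt_of_le hle with heq | hlt
    · -- t = α₀ : both minimizers at α₀... use hno
      exact hno ⟨α₀, hα₀, x₀, xt, hx₀P, heq ▸ hxt, hd₀, hdt⟩
    · -- t < α₀
      have hmono := mono_d A yδ ht0 hlt (hminsum ht0 hxt) (hminsum hα₀ hx₀P)
        (hJrle ht0 hxt (hminsum hα₀ hx₀P)) (hJrle hα₀ hx₀P (hminsum ht0 hxt))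
      have : τ₂ * δ < τ₁ * δ := lt_of_lt_of_le (lt_of_lt_of_le hdt hmono) hd₀.le
      nlinarith
  have hTne : T.Nonempty := ⟨α₁, hα₁T⟩
  have hTbdd : BddBelow T := ⟨α₀, fun t ht => (hTlb t ht).le⟩
  set αs : ℝ := sInf T with hαs_def
  have hαs_lb : α₀ ≤ αs := le_csInf hTne (fun t ht => (hTlb t ht).le)
  have hαs : 0 < αs := lt_of_lt_of_le hα₀ hαs_lb
  -- uniform ℓ¹ bound for minimizers with parameter ≥ αs/2
  set C : ℝ := (δ^2 / αs + rdag) / (1 - η) with hCdef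
  have hCb : ∀ {α x}, 0 < α → αs / 2 ≤ α → P α x → S1 x ≤ C := by
    intro α x hα hge hx
    have h1 := hmin_dag hα hx
    have h2 := ge_Rr hη0 (hminsum hα hx)
    have h3 : α * ((1 - η) * S1 x) ≤ (1/2) * δ^2 + α * rdag := by
      nlinarith [sq_nonneg ‖A x - yδ‖]
    have h4 : (1 - η) * S1 x ≤ δ^2 / αs + rdag := by
      have h5 : (1/2) * δ^2 ≤ (δ^2 / αs) * α := by
        have h6 := mul_le_mul_of_nonneg_left hge (div_nonneg (sq_nonneg δ) hαs.le)
        have h7 := div_mul_cancel₀ (δ^2) (ne_of_gt hαs)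
        have heq : (δ^2 / αs) * (αs / 2) = (1/2) * δ^2 := by linear_combination h7 / 2
        linarith
      nlinarith [S1_nonneg x]
    rw [hCdef, le_div_iff₀ (show (0:ℝ) < 1 - η from hm)]
    linarith [h4]
  -- case analysis on whether αs ∈ T
  by_cases hcase : αs ∈ T
  · -- case A : approach from the left
    obtain ⟨_, xs, hxsP, hxsd⟩ := hcase
    set a : ℕ → ℝ := fun n => αs - αs / (n + 2) with ha_def
    have ha_lt : ∀ n, a n < αs := by
      intro n
      have : 0 < αs / ((n:ℝ) + 2) := by positivity
      simp only [ha_def]; linarith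
    have ha_ge : ∀ n, αs / 2 ≤ a n := by
      intro n
      have h1 : αs / ((n:ℝ) + 2) ≤ αs / 2 := by
        apply div_le_div_of_nonneg_left hαs.le (by norm_num)
        have := Nat.cast_nonneg (α := ℝ) n
        linarith
      simp only [ha_def]; linarith
    have ha_pos : ∀ n, 0 < a n := fun n => lt_of_lt_of_le (by positivity) (ha_ge n)
    have ha_tend : Tendsto a atTop (𝓝 αs) := by
      have h1 : Tendsto (fun n : ℕ => αs / (n + 2)) atTop (𝓝 0) := by
        have h2 := (tendsto_const_div_atTop_nhds_zero_nat αs).comp (tendsto_add_atTop_nat 2)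
        exact h2.congr (fun n => by simp only [Function.comp_apply]; push_cast; ring)
      have h3 : Tendsto (fun n : ℕ => αs - αs / (n + 2)) atTop (𝓝 (αs - 0)) :=
        Tendsto.sub tendsto_const_nhds h1
      simpa using h3
    choose xn hxn using fun n => hexist (a n) (ha_pos n)
    have hxnP : ∀ n, P (a n) (xn n) := hxn
    have hxnsum : ∀ n, Summable fun i => |xn n i| := fun n => hminsum (ha_pos n) (hxnP n)
    have hxnS : ∀ n, S1 (xn n) ≤ C := fun n => hCb (ha_pos n) (ha_ge n) (hxnP n)
    have hxnd : ∀ n, ‖A (xn n) - yδ‖ < τ₁ * δ := by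
      intro n
      rcases hdich (ha_pos n) (hxnP n) with h | h
      · exact h
      · exfalso
        have : a n ∈ T := ⟨ha_pos n, xn n, hxnP n, h⟩
        have := csInf_le hTbdd this
        exact absurd (lt_of_le_of_lt this (ha_lt n)) (lt_irrefl _)
    obtain ⟨xb, hxbP, φ, hφ, hxbd⟩ := core A yδ hη0 hη1 hαs ha_pos ha_tend
      (fun n z => hxnP n z) hxnsum hxnS
    have hxbd_le : ‖A xb - yδ‖ ≤ τ₁ * δ :=
      le_of_tendsto hxbd (Eventually.of_forall (fun n => (hxnd (φ n)).le))
    rcases eq_or_lt_of_le hxbd_le with heq | hlt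
    · exact absurd (hcon αs hαs xb hxbP heq.ge)
        (not_lt.mpr (by rw [heq]; nlinarith))
    · exact hno ⟨αs, hαs, xb, xs, hxbP, hxsP, hlt, hxsd⟩
  · -- case B : approach from the right
    obtain ⟨w, hwP⟩ := hexist αs hαs
    have hwd : ‖A w - yδ‖ < τ₁ * δ := by
      rcases hdich hαs hwP with h | h
      · exact h
      · exact absurd (⟨hαs, w, hwP, h⟩ : αs ∈ T) hcase
    set a : ℕ → ℝ := fun n => αs + αs / (n + 2) with ha_def
    have ha_gt : ∀ n, αs < a n := by
      intro n
      have : 0 < αs / ((n:ℝ) + 2) := by positivity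
      simp only [ha_def]; linarith
    have ha_pos : ∀ n, 0 < a n := fun n => lt_trans hαs (ha_gt n)
    have ha_ge : ∀ n, αs / 2 ≤ a n := fun n => le_trans (by linarith) (ha_gt n).le
    have ha_tend : Tendsto a atTop (𝓝 αs) := by
      have h1 : Tendsto (fun n : ℕ => αs / (n + 2)) atTop (𝓝 0) := by
        have h2 := (tendsto_const_div_atTop_nhds_zero_nat αs).comp (tendsto_add_atTop_nat 2)
        exact h2.congr (fun n => by simp only [Function.comp_apply]; push_cast; ring)
      have h3 : Tendsto (fun n : ℕ => αs + αs / (n + 2)) atTop (𝓝 (αs + 0)) :=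
        Tendsto.add tendsto_const_nhds h1
      simpa using h3
    choose xn hxn using fun n => hexist (a n) (ha_pos n)
    have hxnP : ∀ n, P (a n) (xn n) := hxn
    have hxnsum : ∀ n, Summable fun i => |xn n i| := fun n => hminsum (ha_pos n) (hxnP n)
    have hxnS : ∀ n, S1 (xn n) ≤ C := fun n => hCb (ha_pos n) (ha_ge n) (hxnP n)
    have hxnd : ∀ n, τ₂ * δ < ‖A (xn n) - yδ‖ := by
      intro n
      obtain ⟨t, htT, htlt⟩ := exists_lt_of_csInf_lt hTne (ha_gt n)
      obtain ⟨ht0, xt, hxtP, hxtd⟩ := htT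
      have hmono := mono_d A yδ ht0 htlt (hminsum ht0 hxtP) (hxnsum n)
        (hJrle ht0 hxtP (hxnsum n)) (hJrle (ha_pos n) (hxnP n) (hminsum ht0 hxtP))
      exact lt_of_lt_of_le hxtd hmono
    obtain ⟨xb, hxbP, φ, hφ, hxbd⟩ := core A yδ hη0 hη1 hαs ha_pos ha_tend
      (fun n z => hxnP n z) hxnsum hxnS
    have hxbd_ge : τ₂ * δ ≤ ‖A xb - yδ‖ :=
      ge_of_tendsto hxbd (Eventually.of_forall (fun n => (hxnd (φ n)).le))
    rcases eq_or_lt_of_le hxbd_ge with heq | hlt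
    · have h1 := hcon αs hαs xb hxbP
        (le_trans (by nlinarith : τ₁ * δ ≤ τ₂ * δ) heq.le)
      exact absurd h1 (not_lt.mpr heq.ge)
    · exact hno ⟨αs, hαs, w, xb, hwP, hxbP, hwd, hlt⟩

end
end
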